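/- arXiv:2304.12575 — 4 statements merged into one kernel-verified Lean document; each statement's English description precedes it below -/
import Mathlib

section
/- Let n ≥ 1 and let G be a real positive definite (2n+1)×(2n+1) matrix with det G = 1 satisfying J G⁻¹ J = G. If G = M D Mᵀ is a block Cholesky decomposition of G with block sizes (n,1,n) (M block lower triangular with identity diagonal blocks, D block diagonal with positive definite blocks), then there exist a positive definite symmetric n×n matrix Θ and a vector δ ∈ ℝⁿ such that D = diag(Θ, 1, Θ⁻¹) and M has block form [[Iₙ, 0, 0], [δᵀΘ⁻¹, 1, 0], [*, −Θ⁻¹δ, Iₙ]] where * denotes some n×n matrix. -/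
/-!
Since `J² = 1`, the relation `J G⁻¹ J = G` says `G J G = J`. Substituting `G = M D Mᵀ` and
conjugating by the invertible `M` turns it into `(S D)² = 1` for `S = Mᵀ J M`, which for
unitriangular `M` is `[[∗, m₂₁ᵀ + m₃₂, 1], [∗, 1, 0], [1, 0, 0]]`. Three blocks of `(S D)² = 1` give
`m₃₂ = -m₂₁ᵀ`, `D₂² = 1` and `D₁ D₃ = 1`; a positive definite involution is the identity, so
`D₂ = 1`, and one takes `Θ = D₁`, `δ = D₁ m₂₁ᵀ`.
-/

open Matrix

/-- Index type for `(2n+1)×(2n+1)` real matrices with block sizes `(n, 1, n)`. -/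
abbrev Idx (n : ℕ) := (Fin n ⊕ Fin 1) ⊕ Fin n

/-- The `3×3`-block matrix with block sizes `(n,1,n)` and the given blocks. -/
def blk3 {n : ℕ} (A₁₁ : Matrix (Fin n) (Fin n) ℝ) (A₁₂ : Matrix (Fin n) (Fin 1) ℝ)
    (A₁₃ : Matrix (Fin n) (Fin n) ℝ) (A₂₁ : Matrix (Fin 1) (Fin n) ℝ)
    (A₂₂ : Matrix (Fin 1) (Fin 1) ℝ) (A₂₃ : Matrix (Fin 1) (Fin n) ℝ)
    (A₃₁ : Matrix (Fin n) (Fin n) ℝ) (A₃₂ : Matrix (Fin n) (Fin 1) ℝ)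
    (A₃₃ : Matrix (Fin n) (Fin n) ℝ) : Matrix (Idx n) (Idx n) ℝ :=
  Matrix.fromBlocks (Matrix.fromBlocks A₁₁ A₁₂ A₂₁ A₂₂) (Matrix.fromRows A₁₃ A₂₃)
    (Matrix.fromCols A₃₁ A₃₂) A₃₃

/-- The matrix `J = [[0,0,Iₙ],[0,1,0],[Iₙ,0,0]]` with block sizes `(n,1,n)`. -/
def Jmat (n : ℕ) : Matrix (Idx n) (Idx n) ℝ := blk3 0 0 1 0 1 0 1 0 0

/-- The matrix `V = [[−A₀, a₀, 0], [a₀ᵀ, 0, −a₀ᵀ], [0, −a₀, A₀]]` with block sizes `(n,1,n)`. -/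
def Vmat {n : ℕ} (A₀ : Matrix (Fin n) (Fin n) ℝ) (a₀ : Matrix (Fin n) (Fin 1) ℝ) :
    Matrix (Idx n) (Idx n) ℝ :=
  blk3 (-A₀) a₀ 0 a₀ᵀ 0 (-a₀ᵀ) 0 (-a₀) A₀

namespace Matrix

variable {m R : Type*} [Fintype m] [DecidableEq m] [CommRing R]

theorem mul_mul_eq_of_mul_inv_mul_eq {A J : Matrix m m R} (hJ : J * J = 1)
    (hA : IsUnit A.det) (h : J * A⁻¹ * J = A) : A * J * A = J := by
  nth_rw 1 [← h]
  rw [Matrix.mul_assoc (J * A⁻¹) J J, hJ, Matrix.mul_one, nonsing_inv_mul_cancel_right _ _ hA]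

theorem transpose_mul_mul_mul_self_eq_one {M D J : Matrix m m R} (hJ : J * J = 1)
    (hM : IsUnit M.det) (h : M * D * Mᵀ * J * (M * D * Mᵀ) = J) :
    Mᵀ * J * M * D * (Mᵀ * J * M * D) = 1 := by
  have hMt : IsUnit Mᵀ.det := by rwa [det_transpose]
  calc Mᵀ * J * M * D * (Mᵀ * J * M * D)
      = Mᵀ * J * (M * D * Mᵀ * J * (M * D * Mᵀ)) * Mᵀ⁻¹ := by
        simp only [Matrix.mul_assoc, mul_nonsing_inv _ hMt, Matrix.mul_one]
    _ = 1 := by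
        rw [h, Matrix.mul_assoc Mᵀ, hJ, Matrix.mul_one, mul_nonsing_inv _ hMt]

end Matrix

open scoped ComplexOrder in
theorem Matrix.PosDef.eq_one_of_mul_self_eq_one {m 𝕜 : Type*} [Fintype m] [DecidableEq m]
    [RCLike 𝕜] {A : Matrix m m 𝕜} (hA : A.PosDef) (h : A * A = 1) : A = 1 := by
  have hfactor : (A + 1) * (A - 1) = 0 := by
    calc (A + 1) * (A - 1) = A * A - 1 := by noncomm_ring
      _ = 0 := by rw [h, sub_self]
  exact sub_eq_zero.mp ((hA.add_posSemidef PosSemidef.one).isUnit.mul_right_eq_zero.mp hfactor)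

section Blk3

variable {n : ℕ}

theorem blk3_inj {A₁₁ B₁₁ : Matrix (Fin n) (Fin n) ℝ} {A₁₂ B₁₂ : Matrix (Fin n) (Fin 1) ℝ}
    {A₁₃ B₁₃ : Matrix (Fin n) (Fin n) ℝ} {A₂₁ B₂₁ : Matrix (Fin 1) (Fin n) ℝ}
    {A₂₂ B₂₂ : Matrix (Fin 1) (Fin 1) ℝ} {A₂₃ B₂₃ : Matrix (Fin 1) (Fin n) ℝ}
    {A₃₁ B₃₁ : Matrix (Fin n) (Fin n) ℝ} {A₃₂ B₃₂ : Matrix (Fin n) (Fin 1) ℝ}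
    {A₃₃ B₃₃ : Matrix (Fin n) (Fin n) ℝ} :
    blk3 A₁₁ A₁₂ A₁₃ A₂₁ A₂₂ A₂₃ A₃₁ A₃₂ A₃₃ = blk3 B₁₁ B₁₂ B₁₃ B₂₁ B₂₂ B₂₃ B₃₁ B₃₂ B₃₃ ↔
      A₁₁ = B₁₁ ∧ A₁₂ = B₁₂ ∧ A₁₃ = B₁₃ ∧ A₂₁ = B₂₁ ∧ A₂₂ = B₂₂ ∧ A₂₃ = B₂₃ ∧
      A₃₁ = B₃₁ ∧ A₃₂ = B₃₂ ∧ A₃₃ = B₃₃ := by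
  simp only [blk3, fromBlocks_inj, fromRows_inj.eq_iff, fromCols_inj.eq_iff]
  tauto

theorem blk3_one : blk3 1 0 0 0 1 0 0 0 1 = (1 : Matrix (Idx n) (Idx n) ℝ) := by
  ext ((i | i) | i) ((j | j) | j) <;> simp [blk3, one_apply]

theorem blk3_mul (A₁₁ B₁₁ : Matrix (Fin n) (Fin n) ℝ) (A₁₂ B₁₂ : Matrix (Fin n) (Fin 1) ℝ)
    (A₁₃ B₁₃ : Matrix (Fin n) (Fin n) ℝ) (A₂₁ B₂₁ : Matrix (Fin 1) (Fin n) ℝ)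
    (A₂₂ B₂₂ : Matrix (Fin 1) (Fin 1) ℝ) (A₂₃ B₂₃ : Matrix (Fin 1) (Fin n) ℝ)
    (A₃₁ B₃₁ : Matrix (Fin n) (Fin n) ℝ) (A₃₂ B₃₂ : Matrix (Fin n) (Fin 1) ℝ)
    (A₃₃ B₃₃ : Matrix (Fin n) (Fin n) ℝ) :
    blk3 A₁₁ A₁₂ A₁₃ A₂₁ A₂₂ A₂₃ A₃₁ A₃₂ A₃₃ * blk3 B₁₁ B₁₂ B₁₃ B₂₁ B₂₂ B₂₃ B₃₁ B₃₂ B₃₃ =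
      blk3 (A₁₁ * B₁₁ + A₁₂ * B₂₁ + A₁₃ * B₃₁) (A₁₁ * B₁₂ + A₁₂ * B₂₂ + A₁₃ * B₃₂)
        (A₁₁ * B₁₃ + A₁₂ * B₂₃ + A₁₃ * B₃₃) (A₂₁ * B₁₁ + A₂₂ * B₂₁ + A₂₃ * B₃₁)
        (A₂₁ * B₁₂ + A₂₂ * B₂₂ + A₂₃ * B₃₂) (A₂₁ * B₁₃ + A₂₂ * B₂₃ + A₂₃ * B₃₃)
        (A₃₁ * B₁₁ + A₃₂ * B₂₁ + A₃₃ * B₃₁) (A₃₁ * B₁₂ + A₃₂ * B₂₂ + A₃₃ * B₃₂)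
        (A₃₁ * B₁₃ + A₃₂ * B₂₃ + A₃₃ * B₃₃) := by
  ext ((i | i) | i) ((j | j) | j) <;>
    simp [blk3, mul_apply, Fintype.sum_sum_type]

theorem blk3_transpose (A₁₁ : Matrix (Fin n) (Fin n) ℝ) (A₁₂ : Matrix (Fin n) (Fin 1) ℝ)
    (A₁₃ : Matrix (Fin n) (Fin n) ℝ) (A₂₁ : Matrix (Fin 1) (Fin n) ℝ)
    (A₂₂ : Matrix (Fin 1) (Fin 1) ℝ) (A₂₃ : Matrix (Fin 1) (Fin n) ℝ)
    (A₃₁ : Matrix (Fin n) (Fin n) ℝ) (A₃₂ : Matrix (Fin n) (Fin 1) ℝ)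
    (A₃₃ : Matrix (Fin n) (Fin n) ℝ) :
    (blk3 A₁₁ A₁₂ A₁₃ A₂₁ A₂₂ A₂₃ A₃₁ A₃₂ A₃₃)ᵀ =
      blk3 A₁₁ᵀ A₂₁ᵀ A₃₁ᵀ A₁₂ᵀ A₂₂ᵀ A₃₂ᵀ A₁₃ᵀ A₂₃ᵀ A₃₃ᵀ := by
  ext ((i | i) | i) ((j | j) | j) <;> simp [blk3]

theorem Jmat_mul_self : Jmat n * Jmat n = 1 := by
  rw [Jmat, blk3_mul, ← blk3_one]
  congr 1 <;> simp

theorem isUnit_det_blk3_unitLower (b : Matrix (Fin 1) (Fin n) ℝ) (c : Matrix (Fin n) (Fin n) ℝ)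
    (d : Matrix (Fin n) (Fin 1) ℝ) : IsUnit (blk3 1 0 0 b 1 0 c d 1).det := by
  refine isUnit_det_of_right_inverse (B := blk3 1 0 0 (-b) 1 0 (d * b - c) (-d) 1) ?_
  rw [blk3_mul, ← blk3_one]
  congr 1 <;> simp [Matrix.mul_neg, Matrix.mul_sub]
  abel

theorem blk3_unitLower_transpose_mul_Jmat_mul (b : Matrix (Fin 1) (Fin n) ℝ)
    (c : Matrix (Fin n) (Fin n) ℝ) (d : Matrix (Fin n) (Fin 1) ℝ) :
    (blk3 1 0 0 b 1 0 c d 1)ᵀ * Jmat n * blk3 1 0 0 b 1 0 c d 1 =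
      blk3 (cᵀ + bᵀ * b + c) (bᵀ + d) 1 (dᵀ + b) 1 0 1 0 0 := by
  rw [blk3_transpose, Jmat, blk3_mul, blk3_mul]
  congr 1 <;> simp

theorem blk3_constraints_of_mul_self_eq_one {X : Matrix (Fin n) (Fin n) ℝ}
    {f : Matrix (Fin n) (Fin 1) ℝ} {g : Matrix (Fin 1) (Fin n) ℝ} {D₁ D₃ : Matrix (Fin n) (Fin n) ℝ}
    {D₂ : Matrix (Fin 1) (Fin 1) ℝ} (hD₁ : IsUnit D₁.det) (hD₂ : IsUnit D₂.det)
    (h : blk3 X f 1 g 1 0 1 0 0 * blk3 D₁ 0 0 0 D₂ 0 0 0 D₃ *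
      (blk3 X f 1 g 1 0 1 0 0 * blk3 D₁ 0 0 0 D₂ 0 0 0 D₃) = 1) :
    f = 0 ∧ D₂ * D₂ = 1 ∧ D₁ * D₃ = 1 := by
  simp only [blk3_mul, ← blk3_one, blk3_inj] at h
  obtain ⟨-, -, -, -, h₂₂, -, -, h₃₂, h₃₃⟩ := h
  simp only [Matrix.mul_zero, Matrix.zero_mul, add_zero, zero_add, Matrix.one_mul] at h₂₂ h₃₂ h₃₃
  have hf : f = 0 := by
    rw [← mul_nonsing_inv_cancel_right D₂ f hD₂, ← nonsing_inv_mul_cancel_left D₁ (f * D₂) hD₁,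
      h₃₂, Matrix.mul_zero, Matrix.zero_mul]
  exact ⟨hf, by simpa [hf] using h₂₂, h₃₃⟩

end Blk3

theorem stmt0_general (n : ℕ) (G M D : Matrix (Idx n) (Idx n) ℝ)
    (hGpd : G.PosDef)
    (hGJ : Jmat n * G⁻¹ * Jmat n = G)
    (hM : ∃ (m₂₁ : Matrix (Fin 1) (Fin n) ℝ) (m₃₁ : Matrix (Fin n) (Fin n) ℝ)
      (m₃₂ : Matrix (Fin n) (Fin 1) ℝ), M = blk3 1 0 0 m₂₁ 1 0 m₃₁ m₃₂ 1)
    (hD : ∃ (D₁ : Matrix (Fin n) (Fin n) ℝ) (D₂ : Matrix (Fin 1) (Fin 1) ℝ)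
      (D₃ : Matrix (Fin n) (Fin n) ℝ), D₁.PosDef ∧ D₂.PosDef ∧ D₃.PosDef ∧
      D = blk3 D₁ 0 0 0 D₂ 0 0 0 D₃)
    (hChol : G = M * D * Mᵀ) :
    ∃ (Θ : Matrix (Fin n) (Fin n) ℝ) (δ : Matrix (Fin n) (Fin 1) ℝ),
      Θ.PosDef ∧ Θᵀ = Θ ∧ D = blk3 Θ 0 0 0 1 0 0 0 Θ⁻¹ ∧
      ∃ star : Matrix (Fin n) (Fin n) ℝ,
        M = blk3 1 0 0 (δᵀ * Θ⁻¹) 1 0 star (-(Θ⁻¹ * δ)) 1 := by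
  obtain ⟨b, c, d, rfl⟩ := hM
  obtain ⟨D₁, D₂, D₃, hD₁, hD₂, -, rfl⟩ := hD
  have hGJG : G * Jmat n * G = Jmat n :=
    mul_mul_eq_of_mul_inv_mul_eq Jmat_mul_self ((isUnit_iff_isUnit_det G).mp hGpd.isUnit) hGJ
  have hSD := transpose_mul_mul_mul_self_eq_one Jmat_mul_self (isUnit_det_blk3_unitLower b c d)
    (hChol ▸ hGJG)
  rw [blk3_unitLower_transpose_mul_Jmat_mul] at hSD
  have hD₁det : IsUnit D₁.det := (isUnit_iff_isUnit_det D₁).mp hD₁.isUnit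
  have hD₂det : IsUnit D₂.det := (isUnit_iff_isUnit_det D₂).mp hD₂.isUnit
  obtain ⟨hbd, hD₂sq, hD₁₃⟩ := blk3_constraints_of_mul_self_eq_one hD₁det hD₂det hSD
  have hD₁symm : D₁ᵀ = D₁ := (isHermitian_iff_isSymm.mp hD₁.isHermitian).eq
  refine ⟨D₁, D₁ * bᵀ, hD₁, hD₁symm, ?_, c, ?_⟩
  · rw [hD₂.eq_one_of_mul_self_eq_one hD₂sq, inv_eq_right_inv hD₁₃]
  · rw [transpose_mul, transpose_transpose, hD₁symm, mul_nonsing_inv_cancel_right _ _ hD₁det,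
      nonsing_inv_mul_cancel_left _ _ hD₁det, eq_neg_of_add_eq_zero_right hbd]

/-- If `G ∈ Sym⁺₁(2n+1)` satisfies `J G⁻¹ J = G` and `G = M D Mᵀ` is a block
Cholesky decomposition with block sizes `(n,1,n)`, then `D = diag(Θ, 1, Θ⁻¹)` and
`M = [[Iₙ, 0, 0], [δᵀΘ⁻¹, 1, 0], [∗, −Θ⁻¹δ, Iₙ]]` for some `Θ ∈ Sym⁺(n)` and `δ ∈ ℝⁿ`. -/
theorem stmt0 (n : ℕ) (hn : 1 ≤ n) (G M D : Matrix (Idx n) (Idx n) ℝ)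
    (hGpd : G.PosDef) (hGdet : G.det = 1)
    (hGJ : Jmat n * G⁻¹ * Jmat n = G)
    (hM : ∃ (m₂₁ : Matrix (Fin 1) (Fin n) ℝ) (m₃₁ : Matrix (Fin n) (Fin n) ℝ)
      (m₃₂ : Matrix (Fin n) (Fin 1) ℝ), M = blk3 1 0 0 m₂₁ 1 0 m₃₁ m₃₂ 1)
    (hD : ∃ (D₁ : Matrix (Fin n) (Fin n) ℝ) (D₂ : Matrix (Fin 1) (Fin 1) ℝ)
      (D₃ : Matrix (Fin n) (Fin n) ℝ), D₁.PosDef ∧ D₂.PosDef ∧ D₃.PosDef ∧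
      D = blk3 D₁ 0 0 0 D₂ 0 0 0 D₃)
    (hChol : G = M * D * Mᵀ) :
    ∃ (Θ : Matrix (Fin n) (Fin n) ℝ) (δ : Matrix (Fin n) (Fin 1) ℝ),
      Θ.PosDef ∧ Θᵀ = Θ ∧ D = blk3 Θ 0 0 0 1 0 0 0 Θ⁻¹ ∧
      ∃ star : Matrix (Fin n) (Fin n) ℝ,
        M = blk3 1 0 0 (δᵀ * Θ⁻¹) 1 0 star (-(Θ⁻¹ * δ)) 1 :=
  stmt0_general n G M D hGpd hGJ hM hD hChol
end

section
/- Let P₀ and Q₀ be real positive definite (2n+1)×(2n+1) matrices with det P₀ = det Q₀ = 1, and define sequences recursively by P_{k+1} = ½(P_k + Q_k) and Q_{k+1} = 2(P_k⁻¹ + Q_k⁻¹)⁻¹. Then both sequences (P_k) and (Q_k) converge to R₀ = P₀^{1/2}(P₀^{−1/2} Q₀ P₀^{−1/2})^{1/2} P₀^{1/2}, and R₀ is positive definite with det R₀ = 1. -/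
open Matrix

open Filter Topology

/-! Congruence `X ↦ S * X * S` commutes with both the arithmetic and the harmonic mean. With
`S = P₀^{1/2}` this reduces the iteration to the one starting from `(1, M)`,
`M = P₀^{-1/2} Q₀ P₀^{-1/2}`. In an orthonormal eigenbasis of `M` all iterates are diagonal, and on
an eigenvalue `λ` the scalar iteration from `(1, λ)` keeps the harmonic term below the arithmetic
one and their product equal to `λ`, so `√λ` lies between them, while their gap at least halves at
each step; hence both converge to `√λ`. The limit `R₀ = S M^{1/2} S` satisfies
`(det R₀)² = det P₀ · det Q₀`. -/

section Step

variable {A : Type*} [Add A] [Inv A] [SMul ℝ A]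

noncomputable def ahmStep (x : A × A) : A × A :=
  ((2⁻¹ : ℝ) • (x.1 + x.2), (2 : ℝ) • (x.1⁻¹ + x.2⁻¹)⁻¹)

theorem ahmStep_iterate_of_rec {P Q : ℕ → A}
    (hP : ∀ k, P (k + 1) = (2⁻¹ : ℝ) • (P k + Q k))
    (hQ : ∀ k, Q (k + 1) = (2 : ℝ) • ((P k)⁻¹ + (Q k)⁻¹)⁻¹) (k : ℕ) :
    ahmStep^[k] (P 0, Q 0) = (P k, Q k) := by
  induction k with
  | zero => rfl
  | succ k ih => rw [Function.iterate_succ_apply', ih, ahmStep, hP, hQ]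

theorem ahmStep_iterate_apply {ι : Type*} (x : (ι → A) × (ι → A)) (i : ι) (k : ℕ) :
    ((ahmStep^[k] x).1 i, (ahmStep^[k] x).2 i) = ahmStep^[k] (x.1 i, x.2 i) :=
  Function.Semiconj.iterate_right (f := fun y : (ι → A) × (ι → A) => (y.1 i, y.2 i))
    (fun _ => rfl) k x

end Step

section Scalar

variable {x : ℝ × ℝ}

theorem ahmStep_pos (h₁ : 0 < x.1) (h₂ : 0 < x.2) : 0 < (ahmStep x).1 ∧ 0 < (ahmStep x).2 := by
  simp only [ahmStep, smul_eq_mul]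
  constructor <;> positivity

theorem ahmStep_fst_mul_snd (h₁ : 0 < x.1) (h₂ : 0 < x.2) :
    (ahmStep x).1 * (ahmStep x).2 = x.1 * x.2 := by
  simp only [ahmStep, smul_eq_mul]
  field_simp
  ring

theorem ahmStep_fst_sub_snd (h₁ : 0 < x.1) (h₂ : 0 < x.2) :
    (ahmStep x).1 - (ahmStep x).2 = (x.1 - x.2) ^ 2 / (2 * (x.1 + x.2)) := by
  simp only [ahmStep, smul_eq_mul]
  field_simp
  ring

theorem ahmStep_snd_le_fst (h₁ : 0 < x.1) (h₂ : 0 < x.2) : (ahmStep x).2 ≤ (ahmStep x).1 := by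
  rw [← sub_nonneg, ahmStep_fst_sub_snd h₁ h₂]
  positivity

theorem abs_ahmStep_fst_sub_snd_le (h₁ : 0 < x.1) (h₂ : 0 < x.2) :
    |(ahmStep x).1 - (ahmStep x).2| ≤ |x.1 - x.2| / 2 := by
  have hgap : |x.1 - x.2| ≤ x.1 + x.2 := abs_sub_le_iff.2 ⟨by linarith, by linarith⟩
  rw [ahmStep_fst_sub_snd h₁ h₂, abs_of_nonneg (by positivity), ← sq_abs,
    div_le_div_iff₀ (by positivity) two_pos]
  nlinarith [abs_nonneg (x.1 - x.2)]

theorem ahmStep_iterate_pos (h₁ : 0 < x.1) (h₂ : 0 < x.2) (k : ℕ) :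
    0 < (ahmStep^[k] x).1 ∧ 0 < (ahmStep^[k] x).2 := by
  induction k with
  | zero => exact ⟨h₁, h₂⟩
  | succ k ih => rw [Function.iterate_succ_apply']; exact ahmStep_pos ih.1 ih.2

theorem ahmStep_iterate_fst_mul_snd (h₁ : 0 < x.1) (h₂ : 0 < x.2) (k : ℕ) :
    (ahmStep^[k] x).1 * (ahmStep^[k] x).2 = x.1 * x.2 := by
  induction k with
  | zero => rfl
  | succ k ih =>
    obtain ⟨hp, hq⟩ := ahmStep_iterate_pos h₁ h₂ k
    rw [Function.iterate_succ_apply', ahmStep_fst_mul_snd hp hq, ih]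

theorem abs_ahmStep_iterate_fst_sub_snd_le (h₁ : 0 < x.1) (h₂ : 0 < x.2) (k : ℕ) :
    |(ahmStep^[k] x).1 - (ahmStep^[k] x).2| ≤ |x.1 - x.2| * 2⁻¹ ^ k := by
  induction k with
  | zero => simp
  | succ k ih =>
    obtain ⟨hp, hq⟩ := ahmStep_iterate_pos h₁ h₂ k
    rw [Function.iterate_succ_apply', pow_succ]
    linarith [abs_ahmStep_fst_sub_snd_le hp hq]

theorem ahmStep_iterate_snd_le_sqrt_le_fst (h₁ : 0 < x.1) (h₂ : 0 < x.2) (k : ℕ) :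
    (ahmStep^[k + 1] x).2 ≤ √(x.1 * x.2) ∧ √(x.1 * x.2) ≤ (ahmStep^[k + 1] x).1 := by
  obtain ⟨hp, hq⟩ := ahmStep_iterate_pos h₁ h₂ (k + 1)
  have hqp : (ahmStep^[k + 1] x).2 ≤ (ahmStep^[k + 1] x).1 := by
    obtain ⟨hp', hq'⟩ := ahmStep_iterate_pos h₁ h₂ k
    rw [Function.iterate_succ_apply']
    exact ahmStep_snd_le_fst hp' hq'
  rw [← ahmStep_iterate_fst_mul_snd h₁ h₂ (k + 1)]
  constructor
  · exact Real.le_sqrt_of_sq_le (by nlinarith)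
  · exact Real.sqrt_le_iff.2 ⟨hp.le, by nlinarith⟩

theorem tendsto_ahmStep_iterate (h₁ : 0 < x.1) (h₂ : 0 < x.2) :
    Tendsto (fun k => ahmStep^[k] x) atTop (𝓝 (√(x.1 * x.2), √(x.1 * x.2))) := by
  have hgap : Tendsto (fun k => |(ahmStep^[k] x).1 - (ahmStep^[k] x).2|) atTop (𝓝 0) := by
    refine squeeze_zero (fun _ => abs_nonneg _) (abs_ahmStep_iterate_fst_sub_snd_le h₁ h₂) ?_
    simpa using (tendsto_pow_atTop_nhds_zero_of_lt_one (by norm_num : (0 : ℝ) ≤ 2⁻¹)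
      (by norm_num)).const_mul |x.1 - x.2|
  rw [← tendsto_add_atTop_iff_nat 1, tendsto_iff_dist_tendsto_zero]
  refine squeeze_zero (fun _ => dist_nonneg) (fun k => ?_) (hgap.comp (tendsto_add_atTop_nat 1))
  obtain ⟨hq, hp⟩ := ahmStep_iterate_snd_le_sqrt_le_fst h₁ h₂ k
  have hgapk := le_abs_self ((ahmStep^[k + 1] x).1 - (ahmStep^[k + 1] x).2)
  simp only [Function.comp_apply, Prod.dist_eq, Real.dist_eq]
  exact max_le (abs_le.2 ⟨by linarith, by linarith⟩) (abs_le.2 ⟨by linarith, by linarith⟩)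

end Scalar

section Matrix

variable {m : Type*} [Fintype m] [DecidableEq m]

noncomputable def conjDiagonal (U : unitaryGroup m ℝ) : (m → ℝ) →ₐ[ℝ] Matrix m m ℝ :=
  (Unitary.conjStarAlgAut ℝ _ U).toAlgEquiv.toAlgHom.comp (diagonalAlgHom ℝ)

variable (U : unitaryGroup m ℝ)

theorem conjDiagonal_apply (c : m → ℝ) :
    conjDiagonal U c = (U : Matrix m m ℝ) * diagonal c * star (U : Matrix m m ℝ) := rfl

theorem Matrix.IsHermitian.eq_conjDiagonal_eigenvalues {A : Matrix m m ℝ} (hA : A.IsHermitian) :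
    A = conjDiagonal hA.eigenvectorUnitary hA.eigenvalues := by
  conv_lhs => rw [hA.spectral_theorem]
  simp [conjDiagonal_apply]

theorem conjDiagonal_posDef {c : m → ℝ} (hc : ∀ i, 0 < c i) : (conjDiagonal U c).PosDef := by
  rw [conjDiagonal_apply]
  exact Unitary.isUnit_coe.posDef_star_right_conjugate_iff.2 (posDef_diagonal_iff.2 hc)

theorem conjDiagonal_inv {c : m → ℝ} (hc : ∀ i, c i ≠ 0) :
    (conjDiagonal U c)⁻¹ = conjDiagonal U c⁻¹ := by
  refine inv_eq_right_inv ?_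
  have hcc : c * c⁻¹ = 1 := funext fun i => mul_inv_cancel₀ (hc i)
  rw [← map_mul, hcc, map_one]

theorem conjDiagonal_sqrt_mul_self {c : m → ℝ} (hc : ∀ i, 0 ≤ c i) :
    conjDiagonal U (fun i => √(c i)) * conjDiagonal U (fun i => √(c i)) = conjDiagonal U c := by
  rw [← map_mul]
  congr 1
  ext i
  exact Real.mul_self_sqrt (hc i)

theorem continuous_conjDiagonal : Continuous (conjDiagonal U) :=
  (conjDiagonal U).toLinearMap.continuous_of_finiteDimensional

theorem conjDiagonal_ahmStep {c d : m → ℝ} (hc : ∀ i, 0 < c i) (hd : ∀ i, 0 < d i) :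
    ahmStep (conjDiagonal U c, conjDiagonal U d) =
      Prod.map (conjDiagonal U) (conjDiagonal U) (ahmStep (c, d)) := by
  have hcd : ∀ i, (c⁻¹ + d⁻¹) i ≠ 0 := fun i => (add_pos (inv_pos.2 (hc i)) (inv_pos.2 (hd i))).ne'
  rw [ahmStep, ahmStep, Prod.map, conjDiagonal_inv U fun i => (hc i).ne',
    conjDiagonal_inv U fun i => (hd i).ne', ← map_add, ← map_add, conjDiagonal_inv U hcd,
    map_smul, map_smul]

theorem conjDiagonal_ahmStep_iterate {c d : m → ℝ} (hc : ∀ i, 0 < c i) (hd : ∀ i, 0 < d i)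
    (k : ℕ) : ahmStep^[k] (conjDiagonal U c, conjDiagonal U d) =
      Prod.map (conjDiagonal U) (conjDiagonal U) (ahmStep^[k] (c, d)) := by
  induction k with
  | zero => rfl
  | succ k ih =>
    have hpos i := ahmStep_iterate_pos (x := (c i, d i)) (hc i) (hd i) k
    simp only [← ahmStep_iterate_apply (c, d)] at hpos
    rw [Function.iterate_succ_apply', ih, Prod.map, conjDiagonal_ahmStep U (fun i => (hpos i).1)
      (fun i => (hpos i).2), ← Function.iterate_succ_apply' ahmStep]

theorem tendsto_ahmStep_iterate_conjDiagonal {c d : m → ℝ} (hc : ∀ i, 0 < c i)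
    (hd : ∀ i, 0 < d i) :
    Tendsto (fun k => ahmStep^[k] (conjDiagonal U c, conjDiagonal U d)) atTop
      (𝓝 (conjDiagonal U fun i => √(c i * d i), conjDiagonal U fun i => √(c i * d i))) := by
  have h i := tendsto_ahmStep_iterate (x := (c i, d i)) (hc i) (hd i)
  simp only [← ahmStep_iterate_apply (c, d)] at h
  have hpi : Tendsto (fun k => ahmStep^[k] (c, d)) atTop
      (𝓝 ((fun i => √(c i * d i)), (fun i => √(c i * d i)))) :=
    (tendsto_pi_nhds.2 fun i => (h i).fst_nhds).prodMk_nhds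
      (tendsto_pi_nhds.2 fun i => (h i).snd_nhds)
  have hφ : Continuous (Prod.map (conjDiagonal U) (conjDiagonal U)) :=
    (continuous_conjDiagonal U).prodMap (continuous_conjDiagonal U)
  simpa only [conjDiagonal_ahmStep_iterate U hc hd, Function.comp_def, Prod.map_apply]
    using (hφ.tendsto _).comp hpi

theorem Matrix.PosDef.exists_posDef_mul_self_eq {A : Matrix m m ℝ} (hA : A.PosDef) :
    ∃ S : Matrix m m ℝ, S.PosDef ∧ S * S = A :=
  ⟨conjDiagonal hA.1.eigenvectorUnitary fun i => √(hA.1.eigenvalues i),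
    conjDiagonal_posDef _ fun i => Real.sqrt_pos.2 (hA.eigenvalues_pos i),
    by rw [conjDiagonal_sqrt_mul_self _ fun i => (hA.eigenvalues_pos i).le,
      ← hA.1.eq_conjDiagonal_eigenvalues]⟩

end Matrix

section Congruence

variable {m : Type*} [Fintype m] [DecidableEq m]

open scoped ComplexOrder in
theorem Matrix.PosDef.mul_mul_same {𝕜 : Type*} [RCLike 𝕜] {A S : Matrix m m 𝕜} (hA : A.PosDef)
    (hS : S.IsHermitian) (hSu : IsUnit S) : (S * A * S).PosDef := by
  simpa only [star_eq_conjTranspose, hS.eq] using hSu.posDef_star_right_conjugate_iff.2 hA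

theorem Matrix.det_mul_mul_same_sq {K : Type*} [Field K] {S T Q : Matrix m m K}
    (hS : IsUnit S.det) (hT : T * T = S⁻¹ * Q * S⁻¹) :
    (S * T * S).det ^ 2 = (S * S).det * Q.det := by
  have hTdet := congrArg det hT
  simp only [det_mul, det_nonsing_inv] at hTdet ⊢
  rw [Ring.inverse_eq_inv'] at hTdet
  have hS₀ := hS.ne_zero
  field_simp at hTdet
  linear_combination S.det ^ 2 * hTdet

theorem Matrix.mul_mul_same_inv {R : Type*} [CommRing R] (S Z : Matrix m m R) :
    (S * Z * S)⁻¹ = S⁻¹ * Z⁻¹ * S⁻¹ := by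
  rw [Matrix.mul_inv_rev, Matrix.mul_inv_rev, mul_assoc]

variable {S : Matrix m m ℝ}

theorem ahmStep_congr (hS : IsUnit S.det) :
    Function.Semiconj (Prod.map (S * · * S) (S * · * S)) ahmStep ahmStep := by
  rintro ⟨X, Y⟩
  simp only [ahmStep, Prod.map, Matrix.mul_mul_same_inv, ← add_mul, ← mul_add]
  rw [nonsing_inv_nonsing_inv S hS, mul_smul_comm, smul_mul_assoc, mul_smul_comm, smul_mul_assoc]

theorem tendsto_ahmStep_iterate_congr {P₀ Q₀ : Matrix m m ℝ} (hS : IsUnit S.det)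
    (hSS : S * S = P₀) {U : unitaryGroup m ℝ} {d : m → ℝ}
    (hM : S⁻¹ * Q₀ * S⁻¹ = conjDiagonal U d) (hd : ∀ i, 0 < d i) :
    Tendsto (fun k => ahmStep^[k] (P₀, Q₀)) atTop
      (𝓝 (S * conjDiagonal U (fun i => √(d i)) * S, S * conjDiagonal U (fun i => √(d i)) * S)) := by
  have h₀ : (P₀, Q₀) = Prod.map (S * · * S) (S * · * S) (conjDiagonal U 1, conjDiagonal U d) := by
    rw [Prod.map, map_one, mul_one, hSS, ← hM, ← mul_assoc, ← mul_assoc, mul_nonsing_inv S hS,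
      one_mul, mul_assoc, nonsing_inv_mul S hS, mul_one]
  have hlim := tendsto_ahmStep_iterate_conjDiagonal U (c := 1) (fun _ => one_pos) hd
  have hf : Continuous (Prod.map (S * · * S) (S * · * S)) := by fun_prop
  simp only [Pi.one_apply, one_mul] at hlim
  simpa only [h₀, (Function.Semiconj.iterate_right (ahmStep_congr hS) _).eq, Function.comp_def,
    Prod.map_apply] using (hf.tendsto _).comp hlim

end Congruence

/-- The AHM sequences both converge to the geodesic midpoint
`R₀ = P₀^{1/2}(P₀^{−1/2} Q₀ P₀^{−1/2})^{1/2} P₀^{1/2}`, which is positive definite with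
determinant one. (Here `Sq` is the positive definite square root of `P₀` and `T` that of
`P₀^{−1/2} Q₀ P₀^{−1/2} = Sq⁻¹ · Q₀ · Sq⁻¹`.) -/
theorem stmt11 (n : ℕ) (P Q : ℕ → Matrix (Idx n) (Idx n) ℝ)
    (hP0 : (P 0).PosDef) (hQ0 : (Q 0).PosDef)
    (hP0det : (P 0).det = 1) (hQ0det : (Q 0).det = 1)
    (hPrec : ∀ k, P (k + 1) = (2⁻¹ : ℝ) • (P k + Q k))
    (hQrec : ∀ k, Q (k + 1) = (2 : ℝ) • ((P k)⁻¹ + (Q k)⁻¹)⁻¹) :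
    ∃ R₀ : Matrix (Idx n) (Idx n) ℝ, R₀.PosDef ∧ R₀.det = 1 ∧
      (∃ Sq T : Matrix (Idx n) (Idx n) ℝ, Sq.PosDef ∧ Sq * Sq = P 0 ∧
        T.PosDef ∧ T * T = Sq⁻¹ * Q 0 * Sq⁻¹ ∧ R₀ = Sq * T * Sq) ∧
      Filter.Tendsto P Filter.atTop (nhds R₀) ∧
      Filter.Tendsto Q Filter.atTop (nhds R₀) := by
  obtain ⟨Sq, hSq, hSqSq⟩ := hP0.exists_posDef_mul_self_eq
  have hSqdet : IsUnit Sq.det := hSq.det_pos.ne'.isUnit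
  have hM : (Sq⁻¹ * Q 0 * Sq⁻¹).PosDef := hQ0.mul_mul_same hSq.inv.1 hSq.inv.isUnit
  set U := hM.1.eigenvectorUnitary
  set T := conjDiagonal U fun i => √(hM.1.eigenvalues i)
  have hT : T.PosDef := conjDiagonal_posDef U fun i => Real.sqrt_pos.2 (hM.eigenvalues_pos i)
  have hTT : T * T = Sq⁻¹ * Q 0 * Sq⁻¹ := by
    rw [conjDiagonal_sqrt_mul_self U fun i => (hM.eigenvalues_pos i).le,
      ← hM.1.eq_conjDiagonal_eigenvalues]
  have hR : (Sq * T * Sq).PosDef := hT.mul_mul_same hSq.1 hSq.isUnit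
  have hRdet : (Sq * T * Sq).det = 1 := by
    have hsq := Matrix.det_mul_mul_same_sq hSqdet hTT
    rwa [hSqSq, hP0det, hQ0det, one_mul, pow_eq_one_iff_of_nonneg hR.det_pos.le two_ne_zero]
      at hsq
  have hlim := tendsto_ahmStep_iterate_congr hSqdet hSqSq hM.1.eq_conjDiagonal_eigenvalues
    hM.eigenvalues_pos
  simp only [ahmStep_iterate_of_rec hPrec hQrec] at hlim
  exact ⟨Sq * T * Sq, hR, hRdet, ⟨Sq, T, hSq, hSqSq, hT, hTT, rfl⟩, hlim.fst_nhds,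
    hlim.snd_nhds⟩
end

section
/- Let A₀ be a real symmetric n×n matrix and a₀ ∈ ℝⁿ, let V = [[−A₀, a₀, 0], [a₀ᵀ, 0, −a₀ᵀ], [0, −a₀, A₀]], and for each t let exp(tV) = G₁(t) G₂(t) be the block Cholesky decomposition with block sizes (n,1,n). Write L(t) = G₁(t)⁻¹ V G₁(t) = [[−Q(t), r(t), 0], [a₀ᵀ, 0, −r(t)ᵀ], [0, −a₀, Q(t)ᵀ]] and M(t) = [[−Q(t), 0, 0], [a₀ᵀ, 0, 0], [0, −a₀, Q(t)ᵀ]]. Then L satisfies the Lax equation L̇(t) = [L(t), M(t)] = L(t)M(t) − M(t)L(t) for all t ∈ ℝ. -/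
open Matrix

/-!
Differentiating `exp(tV) = G₁ G₂` and conjugating by `G₁` gives
`L = G₁⁻¹ V G₁ = G₁⁻¹ Ġ₁ + Ġ₂ G₂⁻¹`, a block lower triangular matrix plus a strictly block upper
triangular one. So `G₁⁻¹ Ġ₁` is the block lower part of `L`, namely `M`, and differentiating
`L = G₁⁻¹ V G₁` gives `L̇ = L M - M L`. The factors are differentiable because `G₂` is an explicit
rational function of the blocks of `exp(tV)`, whose leading principal blocks are invertible.
-/

namespace Matrix

variable {m α R : Type*}

/-- Block lower triangularity is expressed as `M.BlockTriangular (toDual ∘ b)`. -/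
def StrictBlockTriangular [LE α] [Zero R] (M : Matrix m m R) (b : m → α) : Prop :=
  ∀ ⦃i j⦄, b j ≤ b i → M i j = 0

variable {M N : Matrix m m R} {b : m → α}

theorem StrictBlockTriangular.blockTriangular [Preorder α] [Zero R]
    (hM : M.StrictBlockTriangular b) : M.BlockTriangular b :=
  fun _ _ hij => hM hij.le

theorem StrictBlockTriangular.mul_blockTriangular [LinearOrder α] [Fintype m]
    [NonUnitalNonAssocSemiring R] (hM : M.StrictBlockTriangular b) (hN : N.BlockTriangular b) :
    (M * N).StrictBlockTriangular b := by
  intro i j hji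
  rw [mul_apply]
  refine Finset.sum_eq_zero fun k _ => ?_
  rcases le_or_gt (b k) (b i) with hki | hik
  · rw [hM hki, zero_mul]
  · rw [hN (hji.trans_lt hik), mul_zero]

theorem BlockTriangular.eq_of_add_eq_add [LinearOrder α] [AddZeroClass R]
    {M' N' : Matrix m m R} (hM : M.BlockTriangular (OrderDual.toDual ∘ b))
    (hM' : M'.BlockTriangular (OrderDual.toDual ∘ b)) (hN : N.StrictBlockTriangular b)
    (hN' : N'.StrictBlockTriangular b) (h : M + N = M' + N') : M = M' := by
  ext i j
  have hij := congrFun (congrFun h i) j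
  rcases le_or_gt (b j) (b i) with hji | hij'
  · simpa [hN hji, hN' hji] using hij
  · rw [hM hij', hM' hij']

end Matrix

section NormedAlgebra

variable {𝕜 𝔸 : Type*} [NontriviallyNormedField 𝕜] [NormedRing 𝔸] [NormedAlgebra 𝕜 𝔸]
  {G G₁ G₂ : 𝕜 → 𝔸} {G' G₁' G₂' : 𝔸} {t : 𝕜}

theorem HasDerivAt.ringInverse [HasSummableGeomSeries 𝔸] (hG : HasDerivAt G G' t)
    (ht : IsUnit (G t)) :
    HasDerivAt (fun s => Ring.inverse (G s))
      (-(Ring.inverse (G t) * G' * Ring.inverse (G t))) t := by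
  obtain ⟨u, hu⟩ := ht
  have hinv := hasFDerivAt_ringInverse (𝕜 := 𝕜) u
  rw [hu] at hinv
  refine (hinv.comp_hasDerivAt t hG).congr_deriv ?_
  simp [← hu]

theorem HasDerivAt.ringInverse_mul_mul [HasSummableGeomSeries 𝔸] (hG : HasDerivAt G G' t)
    (ht : IsUnit (G t)) (V : 𝔸) :
    HasDerivAt (fun s => Ring.inverse (G s) * V * G s)
      (Ring.inverse (G t) * V * G t * (Ring.inverse (G t) * G') -
        Ring.inverse (G t) * G' * (Ring.inverse (G t) * V * G t)) t := by
  refine (((hG.ringInverse ht).mul_const V).mul hG).congr_deriv ?_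
  obtain ⟨u, hu⟩ := ht
  simp only [← hu, Ring.inverse_unit, mul_assoc, Units.mul_inv_cancel_left]
  noncomm_ring

theorem ringInverse_mul_mul_eq_add (hG₁ : HasDerivAt G₁ G₁' t) (hG₂ : HasDerivAt G₂ G₂' t)
    {V : 𝔸} (hV : HasDerivAt (fun s => G₁ s * G₂ s) (V * (G₁ t * G₂ t)) t)
    (h₁ : IsUnit (G₁ t)) (h₂ : IsUnit (G₂ t)) :
    Ring.inverse (G₁ t) * V * G₁ t = Ring.inverse (G₁ t) * G₁' + G₂' * Ring.inverse (G₂ t) := by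
  have hderiv := hV.unique (hG₁.mul hG₂)
  obtain ⟨u₁, hu₁⟩ := h₁
  obtain ⟨u₂, hu₂⟩ := h₂
  rw [← hu₁, ← hu₂] at hderiv ⊢
  rw [Ring.inverse_unit, Ring.inverse_unit]
  calc ↑u₁⁻¹ * V * ↑u₁ = ↑u₁⁻¹ * (V * (↑u₁ * ↑u₂)) * ↑u₂⁻¹ := by simp [mul_assoc]
    _ = ↑u₁⁻¹ * G₁' + G₂' * ↑u₂⁻¹ := by
      rw [hderiv]; simp [mul_add, add_mul, mul_assoc]

end NormedAlgebra

section BlockLU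

variable {m p q K : Type*} [Fintype m] [Fintype p] [DecidableEq m] [DecidableEq p]
  [DecidableEq q] [CommRing K]

/-- The unit upper factor in `[[A, B], [C, D]] = [[A, 0], [C, D - C A⁻¹ B]] * [[1, A⁻¹ B], [0, 1]]`.
-/
noncomputable def blockLUUpper (X : Matrix (m ⊕ p) (m ⊕ p) K) : Matrix (m ⊕ p) (m ⊕ p) K :=
  fromBlocks 1 (X.toBlocks₁₁⁻¹ * X.toBlocks₁₂) 0 1

theorem fromBlocks_eq_mul_blockLUUpper {P U : Matrix m m K} {R : Matrix p m K}
    {S : Matrix p p K} {W : Matrix m p K} (hP : IsUnit P.det) (hU : IsUnit U.det) :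
    fromBlocks U W 0 1 =
      fromBlocks U 0 0 1 * blockLUUpper (fromBlocks P 0 R S * fromBlocks U W 0 1) := by
  have hW : U * ((P * U)⁻¹ * (P * W)) = W := by
    rw [Matrix.mul_inv_rev, Matrix.mul_assoc, nonsing_inv_mul_cancel_left _ _ hP,
      mul_nonsing_inv_cancel_left _ _ hU]
  simp [blockLUUpper, fromBlocks_multiply, hW]

noncomputable def blockLUUpper₃ [Fintype q] (X : Matrix ((m ⊕ p) ⊕ q) ((m ⊕ p) ⊕ q) K) :
    Matrix ((m ⊕ p) ⊕ q) ((m ⊕ p) ⊕ q) K :=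
  fromBlocks (blockLUUpper X.toBlocks₁₁) 0 0 1 * blockLUUpper X

end BlockLU

section MatrixCalculus

-- Matrices have no global norm. The `L∞` operator norm induces the product topology used in the
-- statements below, and inside the proofs it makes square matrices a normed algebra.
attribute [local instance] Matrix.linftyOpNormedAddCommGroup Matrix.linftyOpNormedSpace
  Matrix.linftyOpNormedRing Matrix.linftyOpNormedAlgebra

variable {l m o p : Type*} [Fintype l] [Fintype m] [Fintype o] [Fintype p] {t : ℝ}

theorem HasDerivAt.matrix_apply {f : ℝ → Matrix m p ℝ} {f' : Matrix m p ℝ}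
    (hf : HasDerivAt f f' t) (i : m) (j : p) : HasDerivAt (fun s => f s i j) (f' i j) t :=
  (LinearMap.toContinuousLinearMap (entryLinearMap ℝ ℝ i j)).hasFDerivAt.comp_hasDerivAt t hf

theorem HasDerivAt.matrix_apply_eq_zero_of_const {f : ℝ → Matrix m p ℝ} {f' : Matrix m p ℝ}
    (hf : HasDerivAt f f' t) {i : m} {j : p} {c : ℝ} (hc : ∀ s, f s i j = c) : f' i j = 0 :=
  (hf.matrix_apply i j).unique (by simpa only [hc] using hasDerivAt_const t c)

theorem differentiableAt_matrix_iff {f : ℝ → Matrix m p ℝ} :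
    DifferentiableAt ℝ f t ↔ ∀ i j, DifferentiableAt ℝ (fun s => f s i j) t := by
  classical
  refine ⟨fun hf i j => (hf.hasDerivAt.matrix_apply i j).differentiableAt, fun h => ?_⟩
  rw [show f = fun s => ∑ i, ∑ j, f s i j • single i j (1 : ℝ) from
    funext fun s => by simpa using matrix_eq_sum_single (f s)]
  exact .fun_sum fun i _ => .fun_sum fun j _ => (h i j).smul_const _

theorem DifferentiableAt.matrix_mul {A : ℝ → Matrix m o ℝ} {B : ℝ → Matrix o p ℝ}
    (hA : DifferentiableAt ℝ A t) (hB : DifferentiableAt ℝ B t) :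
    DifferentiableAt ℝ (fun s => A s * B s) t := by
  refine differentiableAt_matrix_iff.2 fun i j => ?_
  simp only [mul_apply]
  exact .fun_sum fun k _ =>
    (differentiableAt_matrix_iff.1 hA i k).mul (differentiableAt_matrix_iff.1 hB k j)

theorem DifferentiableAt.matrix_inv [DecidableEq m] {A : ℝ → Matrix m m ℝ}
    (hA : DifferentiableAt ℝ A t) (ht : IsUnit (A t)) :
    DifferentiableAt ℝ (fun s => (A s)⁻¹) t := by
  simp only [nonsing_inv_eq_ringInverse]
  exact hA.inverse ht

theorem DifferentiableAt.matrix_toBlocks₁₁ {A : ℝ → Matrix (m ⊕ o) (p ⊕ l) ℝ}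
    (hA : DifferentiableAt ℝ A t) : DifferentiableAt ℝ (fun s => (A s).toBlocks₁₁) t :=
  differentiableAt_matrix_iff.2 fun _ _ => differentiableAt_matrix_iff.1 hA _ _

theorem DifferentiableAt.matrix_toBlocks₁₂ {A : ℝ → Matrix (m ⊕ o) (p ⊕ l) ℝ}
    (hA : DifferentiableAt ℝ A t) : DifferentiableAt ℝ (fun s => (A s).toBlocks₁₂) t :=
  differentiableAt_matrix_iff.2 fun _ _ => differentiableAt_matrix_iff.1 hA _ _

theorem DifferentiableAt.matrix_fromBlocks {A : ℝ → Matrix m p ℝ} {B : ℝ → Matrix m l ℝ}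
    {C : ℝ → Matrix o p ℝ} {D : ℝ → Matrix o l ℝ} (hA : DifferentiableAt ℝ A t)
    (hB : DifferentiableAt ℝ B t) (hC : DifferentiableAt ℝ C t) (hD : DifferentiableAt ℝ D t) :
    DifferentiableAt ℝ (fun s => fromBlocks (A s) (B s) (C s) (D s)) t := by
  refine differentiableAt_matrix_iff.2 fun i j => ?_
  rcases i with i | i <;> rcases j with j | j
  · exact differentiableAt_matrix_iff.1 hA i j
  · exact differentiableAt_matrix_iff.1 hB i j
  · exact differentiableAt_matrix_iff.1 hC i j
  · exact differentiableAt_matrix_iff.1 hD i j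

theorem DifferentiableAt.blockLUUpper [DecidableEq m] [DecidableEq o]
    {X : ℝ → Matrix (m ⊕ o) (m ⊕ o) ℝ} (hX : DifferentiableAt ℝ X t)
    (ht : IsUnit (X t).toBlocks₁₁) : DifferentiableAt ℝ (fun s => blockLUUpper (X s)) t :=
  (differentiableAt_const 1).matrix_fromBlocks
    ((hX.matrix_toBlocks₁₁.matrix_inv ht).matrix_mul hX.matrix_toBlocks₁₂)
    (differentiableAt_const 0) (differentiableAt_const 1)

theorem DifferentiableAt.blockLUUpper₃ [DecidableEq m] [DecidableEq o] [DecidableEq p]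
    {X : ℝ → Matrix ((m ⊕ o) ⊕ p) ((m ⊕ o) ⊕ p) ℝ} (hX : DifferentiableAt ℝ X t)
    (h₁ : IsUnit (X t).toBlocks₁₁) (h₂ : IsUnit (X t).toBlocks₁₁.toBlocks₁₁) :
    DifferentiableAt ℝ (fun s => blockLUUpper₃ (X s)) t :=
  ((hX.matrix_toBlocks₁₁.blockLUUpper h₂).matrix_fromBlocks (differentiableAt_const 0)
    (differentiableAt_const 0) (differentiableAt_const 1)).matrix_mul (hX.blockLUUpper h₁)

variable {α : Type*} [DecidableEq m] [LinearOrder α] {b : m → α}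

theorem Matrix.hasDerivAt_exp_smul (V : Matrix m m ℝ) (t : ℝ) :
    HasDerivAt (fun s : ℝ => NormedSpace.exp (s • V)) (V * NormedSpace.exp (t • V)) t :=
  hasDerivAt_exp_smul_const' V t

theorem Matrix.differentiableAt_exp_smul (V : Matrix m m ℝ) (t : ℝ) :
    DifferentiableAt ℝ (fun s : ℝ => NormedSpace.exp (s • V)) t :=
  (V.hasDerivAt_exp_smul t).differentiableAt

theorem hasDerivAt_inv_mul_mul_of_exp_eq_mul {V M S : Matrix m m ℝ} {G₁ G₂ : ℝ → Matrix m m ℝ}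
    {t : ℝ} (hdec : ∀ s : ℝ, NormedSpace.exp (s • V) = G₁ s * G₂ s)
    (hG₁ : DifferentiableAt ℝ G₁ t) (hG₂ : DifferentiableAt ℝ G₂ t)
    (hlow : ∀ s, (G₁ s).BlockTriangular (OrderDual.toDual ∘ b))
    (hup : ∀ s, (G₂ s - 1).StrictBlockTriangular b)
    (hsplit : (G₁ t)⁻¹ * V * G₁ t = M + S) (hM : M.BlockTriangular (OrderDual.toDual ∘ b))
    (hS : S.StrictBlockTriangular b) :
    HasDerivAt (fun s => (G₁ s)⁻¹ * V * G₁ s)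
      ((G₁ t)⁻¹ * V * G₁ t * M - M * ((G₁ t)⁻¹ * V * G₁ t)) t := by
  have hunit : IsUnit (G₁ t * G₂ t) := hdec t ▸ Matrix.isUnit_exp _
  have h₁ : IsUnit (G₁ t) := isUnit_of_mul_isUnit_left hunit
  have h₂ : IsUnit (G₂ t) := isUnit_of_mul_isUnit_right hunit
  have hV : HasDerivAt (fun s => G₁ s * G₂ s) (V * (G₁ t * G₂ t)) t := by
    simp only [← hdec]
    exact V.hasDerivAt_exp_smul t
  have hlowInv : (G₁ t)⁻¹.BlockTriangular (OrderDual.toDual ∘ b) := by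
    have := h₁.invertible
    exact blockTriangular_inv_of_blockTriangular (hlow t)
  have hlowDeriv : (deriv G₁ t).BlockTriangular (OrderDual.toDual ∘ b) :=
    fun i j hij => hG₁.hasDerivAt.matrix_apply_eq_zero_of_const fun s => hlow s hij
  have hupInv : (G₂ t)⁻¹.BlockTriangular b := by
    have := h₂.invertible
    refine blockTriangular_inv_of_blockTriangular ?_
    simpa using (hup t).blockTriangular.add blockTriangular_one
  have hupDeriv : (deriv G₂ t).StrictBlockTriangular b := fun i j hij =>
    hG₂.hasDerivAt.matrix_apply_eq_zero_of_const (c := (1 : Matrix m m ℝ) i j) fun s => by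
      simpa [sub_eq_zero] using hup s hij
  have hsum := ringInverse_mul_mul_eq_add hG₁.hasDerivAt hG₂.hasDerivAt hV h₁ h₂
  simp only [← nonsing_inv_eq_ringInverse] at hsum
  have hM' : (G₁ t)⁻¹ * deriv G₁ t = M :=
    (hlowInv.mul hlowDeriv).eq_of_add_eq_add hM (hupDeriv.mul_blockTriangular hupInv) hS
      (hsum.symm.trans hsplit)
  have hLax := hG₁.hasDerivAt.ringInverse_mul_mul h₁ V
  simp only [← nonsing_inv_eq_ringInverse] at hLax
  rw [← hM']
  exact hLax

end MatrixCalculus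

section Blk3

variable {n : ℕ} {B₁₁ : Matrix (Fin n) (Fin n) ℝ} {B₂₁ : Matrix (Fin 1) (Fin n) ℝ}
  {B₂₂ : Matrix (Fin 1) (Fin 1) ℝ} {B₃₁ : Matrix (Fin n) (Fin n) ℝ}
  {B₃₂ : Matrix (Fin n) (Fin 1) ℝ} {B₃₃ : Matrix (Fin n) (Fin n) ℝ}
  {C₁₂ : Matrix (Fin n) (Fin 1) ℝ} {C₁₃ : Matrix (Fin n) (Fin n) ℝ}
  {C₂₃ : Matrix (Fin 1) (Fin n) ℝ}

theorem blk3_lower_eq_fromBlocks :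
    blk3 B₁₁ 0 0 B₂₁ B₂₂ 0 B₃₁ B₃₂ B₃₃ =
      fromBlocks (fromBlocks B₁₁ 0 B₂₁ B₂₂) 0 (fromCols B₃₁ B₃₂) B₃₃ := by
  rw [blk3, fromRows_zero]

theorem blk3_unitUpper_eq_fromBlocks :
    blk3 1 C₁₂ C₁₃ 0 1 C₂₃ 0 0 1 = fromBlocks (fromBlocks 1 C₁₂ 0 1) (fromRows C₁₃ C₂₃) 0 1 := by
  rw [blk3, fromCols_zero]

theorem det_blk3_lower :
    (blk3 B₁₁ 0 0 B₂₁ B₂₂ 0 B₃₁ B₃₂ B₃₃).det = B₁₁.det * B₂₂.det * B₃₃.det := by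
  rw [blk3_lower_eq_fromBlocks, det_fromBlocks_zero₁₂, det_fromBlocks_zero₁₂]

theorem det_blk3_unitUpper : (blk3 1 C₁₂ C₁₃ 0 1 C₂₃ 0 0 1).det = 1 := by
  rw [blk3_unitUpper_eq_fromBlocks, det_fromBlocks_zero₂₁, det_fromBlocks_zero₂₁]
  simp

theorem blk3_unitUpper_eq_blockLUUpper₃ {E : Matrix (Idx n) (Idx n) ℝ}
    (hE : E = blk3 B₁₁ 0 0 B₂₁ B₂₂ 0 B₃₁ B₃₂ B₃₃ * blk3 1 C₁₂ C₁₃ 0 1 C₂₃ 0 0 1)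
    (hunit : IsUnit E) :
    blk3 1 C₁₂ C₁₃ 0 1 C₂₃ 0 0 1 = blockLUUpper₃ E ∧
      IsUnit E.toBlocks₁₁ ∧ IsUnit E.toBlocks₁₁.toBlocks₁₁ := by
  have hdet : IsUnit (B₁₁.det * B₂₂.det * B₃₃.det) := by
    rwa [isUnit_iff_isUnit_det, hE, det_mul, det_blk3_lower, det_blk3_unitUpper,
      mul_one] at hunit
  have hB₁₁ : IsUnit B₁₁.det := isUnit_of_mul_isUnit_left (isUnit_of_mul_isUnit_left hdet)
  have hB₂₂ : IsUnit B₂₂.det := isUnit_of_mul_isUnit_right (isUnit_of_mul_isUnit_left hdet)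
  have hP : IsUnit (fromBlocks B₁₁ 0 B₂₁ B₂₂).det := by
    rw [det_fromBlocks_zero₁₂]
    exact hB₁₁.mul hB₂₂
  have hU : IsUnit (fromBlocks 1 C₁₂ 0 1 : Matrix (Fin n ⊕ Fin 1) (Fin n ⊕ Fin 1) ℝ).det := by
    simp
  have hE₁₁ : E.toBlocks₁₁ = fromBlocks B₁₁ 0 B₂₁ B₂₂ * fromBlocks 1 C₁₂ 0 1 := by
    rw [hE, blk3_lower_eq_fromBlocks, blk3_unitUpper_eq_fromBlocks, fromBlocks_multiply]
    simp
  have hE₁₁₁₁ : E.toBlocks₁₁.toBlocks₁₁ = B₁₁ := by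
    rw [hE₁₁, fromBlocks_multiply]
    simp
  have hinner : fromBlocks 1 C₁₂ 0 1 = blockLUUpper E.toBlocks₁₁ := by
    simpa [hE₁₁] using fromBlocks_eq_mul_blockLUUpper (U := 1) (R := B₂₁) (S := B₂₂) (W := C₁₂)
      hB₁₁ (by simp)
  refine ⟨?_, ?_, ?_⟩
  · rw [blockLUUpper₃, ← hinner, hE, blk3_lower_eq_fromBlocks, blk3_unitUpper_eq_fromBlocks]
    exact fromBlocks_eq_mul_blockLUUpper hP hU
  · rw [hE₁₁, isUnit_iff_isUnit_det, det_mul]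
    exact hP.mul hU
  · rw [hE₁₁₁₁, isUnit_iff_isUnit_det]
    exact hB₁₁

def idxBlock : Idx n → ℕ :=
  Sum.elim (Sum.elim (fun _ => 0) fun _ => 1) fun _ => 2

theorem blockTriangular_blk3_lower :
    (blk3 B₁₁ 0 0 B₂₁ B₂₂ 0 B₃₁ B₃₂ B₃₃).BlockTriangular (OrderDual.toDual ∘ idxBlock) := by
  rintro ((i | i) | i) ((j | j) | j) h <;>
    simp only [Function.comp_apply, OrderDual.toDual_lt_toDual] at h <;> simp_all [idxBlock, blk3]

theorem strictBlockTriangular_blk3 :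
    (blk3 0 C₁₂ C₁₃ 0 0 C₂₃ 0 0 0).StrictBlockTriangular idxBlock := by
  rintro ((i | i) | i) ((j | j) | j) h <;> simp_all [idxBlock, blk3]

theorem strictBlockTriangular_blk3_unitUpper_sub_one :
    (blk3 1 C₁₂ C₁₃ 0 1 C₂₃ 0 0 1 - 1).StrictBlockTriangular idxBlock := by
  rintro ((i | i) | i) ((j | j) | j) h <;> simp_all [idxBlock, blk3, one_apply]

end Blk3

theorem differentiableAt_blk3_factors {n : ℕ} {E G₁ G₂ : ℝ → Matrix (Idx n) (Idx n) ℝ} {t : ℝ}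
    (hlow : ∀ s, ∃ (B₁₁ : Matrix (Fin n) (Fin n) ℝ) (B₂₁ : Matrix (Fin 1) (Fin n) ℝ)
      (B₂₂ : Matrix (Fin 1) (Fin 1) ℝ) (B₃₁ : Matrix (Fin n) (Fin n) ℝ)
      (B₃₂ : Matrix (Fin n) (Fin 1) ℝ) (B₃₃ : Matrix (Fin n) (Fin n) ℝ),
      G₁ s = blk3 B₁₁ 0 0 B₂₁ B₂₂ 0 B₃₁ B₃₂ B₃₃)
    (hup : ∀ s, ∃ (C₁₂ : Matrix (Fin n) (Fin 1) ℝ) (C₁₃ : Matrix (Fin n) (Fin n) ℝ)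
      (C₂₃ : Matrix (Fin 1) (Fin n) ℝ), G₂ s = blk3 1 C₁₂ C₁₃ 0 1 C₂₃ 0 0 1)
    (hEG : ∀ s, E s = G₁ s * G₂ s) (hunit : ∀ s, IsUnit (E s))
    (hE : DifferentiableAt ℝ E t) :
    DifferentiableAt ℝ G₁ t ∧ DifferentiableAt ℝ G₂ t := by
  have key s : G₂ s = blockLUUpper₃ (E s) ∧
      IsUnit (E s).toBlocks₁₁ ∧ IsUnit (E s).toBlocks₁₁.toBlocks₁₁ := by
    obtain ⟨B₁₁, B₂₁, B₂₂, B₃₁, B₃₂, B₃₃, h₁⟩ := hlow s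
    obtain ⟨C₁₂, C₁₃, C₂₃, h₂⟩ := hup s
    rw [h₂]
    exact blk3_unitUpper_eq_blockLUUpper₃ (by rw [hEG, h₁, h₂]) (hunit s)
  have hG₂unit s : IsUnit (G₂ s) := isUnit_of_mul_isUnit_right (hEG s ▸ hunit s)
  have hG₂ : DifferentiableAt ℝ G₂ t := by
    rw [funext fun s => (key s).1]
    exact hE.blockLUUpper₃ (key t).2.1 (key t).2.2
  refine ⟨?_, hG₂⟩
  rw [show G₁ = fun s => E s * (G₂ s)⁻¹ from funext fun s => by
    rw [hEG, mul_nonsing_inv_cancel_right _ _ ((isUnit_iff_isUnit_det _).1 (hG₂unit s))]]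
  exact hE.matrix_mul (hG₂.matrix_inv (hG₂unit t))

theorem stmt13_general (n : ℕ) (A₀ : Matrix (Fin n) (Fin n) ℝ)
    (a₀ : Matrix (Fin n) (Fin 1) ℝ) (G₁ G₂ : ℝ → Matrix (Idx n) (Idx n) ℝ)
    (hlow : ∀ t : ℝ, ∃ (B₁₁ : Matrix (Fin n) (Fin n) ℝ) (B₂₁ : Matrix (Fin 1) (Fin n) ℝ)
      (B₂₂ : Matrix (Fin 1) (Fin 1) ℝ) (B₃₁ : Matrix (Fin n) (Fin n) ℝ)
      (B₃₂ : Matrix (Fin n) (Fin 1) ℝ) (B₃₃ : Matrix (Fin n) (Fin n) ℝ),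
      G₁ t = blk3 B₁₁ 0 0 B₂₁ B₂₂ 0 B₃₁ B₃₂ B₃₃)
    (hup : ∀ t : ℝ, ∃ (C₁₂ : Matrix (Fin n) (Fin 1) ℝ) (C₁₃ : Matrix (Fin n) (Fin n) ℝ)
      (C₂₃ : Matrix (Fin 1) (Fin n) ℝ), G₂ t = blk3 1 C₁₂ C₁₃ 0 1 C₂₃ 0 0 1)
    (hdec : ∀ t : ℝ, NormedSpace.exp (t • Vmat A₀ a₀) = G₁ t * G₂ t)
    (Q : ℝ → Matrix (Fin n) (Fin n) ℝ) (r : ℝ → Matrix (Fin n) (Fin 1) ℝ)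
    (hL : ∀ t : ℝ, (G₁ t)⁻¹ * Vmat A₀ a₀ * G₁ t
      = blk3 (-(Q t)) (r t) 0 a₀ᵀ 0 (-(r t)ᵀ) 0 (-a₀) (Q t)ᵀ) :
    ∀ (t : ℝ) (i j : Idx n),
      HasDerivAt (fun s => blk3 (-(Q s)) (r s) 0 a₀ᵀ 0 (-(r s)ᵀ) 0 (-a₀) (Q s)ᵀ i j)
        ((blk3 (-(Q t)) (r t) 0 a₀ᵀ 0 (-(r t)ᵀ) 0 (-a₀) (Q t)ᵀ *
            blk3 (-(Q t)) 0 0 a₀ᵀ 0 0 0 (-a₀) (Q t)ᵀ -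
          blk3 (-(Q t)) 0 0 a₀ᵀ 0 0 0 (-a₀) (Q t)ᵀ *
            blk3 (-(Q t)) (r t) 0 a₀ᵀ 0 (-(r t)ᵀ) 0 (-a₀) (Q t)ᵀ) i j) t := by
  intro t i j
  obtain ⟨hG₁, hG₂⟩ := differentiableAt_blk3_factors hlow hup hdec
    (fun s => Matrix.isUnit_exp _) ((Vmat A₀ a₀).differentiableAt_exp_smul t)
  have hlow' s : (G₁ s).BlockTriangular (OrderDual.toDual ∘ idxBlock) := by
    obtain ⟨B₁₁, B₂₁, B₂₂, B₃₁, B₃₂, B₃₃, h⟩ := hlow s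
    rw [h]
    exact blockTriangular_blk3_lower
  have hup' s : (G₂ s - 1).StrictBlockTriangular idxBlock := by
    obtain ⟨C₁₂, C₁₃, C₂₃, h⟩ := hup s
    rw [h]
    exact strictBlockTriangular_blk3_unitUpper_sub_one
  have hsplit : (G₁ t)⁻¹ * Vmat A₀ a₀ * G₁ t =
      blk3 (-(Q t)) 0 0 a₀ᵀ 0 0 0 (-a₀) (Q t)ᵀ + blk3 0 (r t) 0 0 0 (-(r t)ᵀ) 0 0 0 := by
    ext ((i | i) | i) ((j | j) | j) <;> simp [hL, blk3]
  have hLax := hasDerivAt_inv_mul_mul_of_exp_eq_mul hdec hG₁ hG₂ hlow' hup' hsplit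
    blockTriangular_blk3_lower strictBlockTriangular_blk3
  simpa only [hL] using hLax.matrix_apply i j

/-- With `exp(tV) = G₁(t) G₂(t)` the block Cholesky decomposition and
`L(t) = G₁(t)⁻¹ V G₁(t) = [[−Q(t), r(t), 0], [a₀ᵀ, 0, −r(t)ᵀ], [0, −a₀, Q(t)ᵀ]]`,
`M(t) = [[−Q(t), 0, 0], [a₀ᵀ, 0, 0], [0, −a₀, Q(t)ᵀ]]`, the Lax equation
`L̇(t) = L(t)M(t) − M(t)L(t)` holds for all `t`. -/
theorem stmt13 (n : ℕ) (A₀ : Matrix (Fin n) (Fin n) ℝ) (hA₀ : A₀ᵀ = A₀)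
    (a₀ : Matrix (Fin n) (Fin 1) ℝ) (G₁ G₂ : ℝ → Matrix (Idx n) (Idx n) ℝ)
    (hlow : ∀ t : ℝ, ∃ (B₁₁ : Matrix (Fin n) (Fin n) ℝ) (B₂₁ : Matrix (Fin 1) (Fin n) ℝ)
      (B₂₂ : Matrix (Fin 1) (Fin 1) ℝ) (B₃₁ : Matrix (Fin n) (Fin n) ℝ)
      (B₃₂ : Matrix (Fin n) (Fin 1) ℝ) (B₃₃ : Matrix (Fin n) (Fin n) ℝ),
      G₁ t = blk3 B₁₁ 0 0 B₂₁ B₂₂ 0 B₃₁ B₃₂ B₃₃)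
    (hup : ∀ t : ℝ, ∃ (C₁₂ : Matrix (Fin n) (Fin 1) ℝ) (C₁₃ : Matrix (Fin n) (Fin n) ℝ)
      (C₂₃ : Matrix (Fin 1) (Fin n) ℝ), G₂ t = blk3 1 C₁₂ C₁₃ 0 1 C₂₃ 0 0 1)
    (hdec : ∀ t : ℝ, NormedSpace.exp (t • Vmat A₀ a₀) = G₁ t * G₂ t)
    (Q : ℝ → Matrix (Fin n) (Fin n) ℝ) (r : ℝ → Matrix (Fin n) (Fin 1) ℝ)
    (hL : ∀ t : ℝ, (G₁ t)⁻¹ * Vmat A₀ a₀ * G₁ t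
      = blk3 (-(Q t)) (r t) 0 a₀ᵀ 0 (-(r t)ᵀ) 0 (-a₀) (Q t)ᵀ) :
    ∀ (t : ℝ) (i j : Idx n),
      HasDerivAt (fun s => blk3 (-(Q s)) (r s) 0 a₀ᵀ 0 (-(r s)ᵀ) 0 (-a₀) (Q s)ᵀ i j)
        ((blk3 (-(Q t)) (r t) 0 a₀ᵀ 0 (-(r t)ᵀ) 0 (-a₀) (Q t)ᵀ *
            blk3 (-(Q t)) 0 0 a₀ᵀ 0 0 0 (-a₀) (Q t)ᵀ -
          blk3 (-(Q t)) 0 0 a₀ᵀ 0 0 0 (-a₀) (Q t)ᵀ *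
            blk3 (-(Q t)) (r t) 0 a₀ᵀ 0 (-(r t)ᵀ) 0 (-a₀) (Q t)ᵀ) i j) t :=
  stmt13_general n A₀ a₀ G₁ G₂ hlow hup hdec Q r hL
end

section
/- Let A₀ be a real symmetric n×n matrix and a₀ ∈ ℝⁿ, and let V = [[−A₀, a₀, 0], [a₀ᵀ, 0, −a₀ᵀ], [0, −a₀, A₀]] (block sizes n,1,n). Suppose L : ℝ → M(2n+1, ℝ) is a differentiable map of the block form L(t) = [[−Q(t), r(t), 0], [a₀ᵀ, 0, −r(t)ᵀ], [0, −a₀, Q(t)ᵀ]] satisfying L̇ = [L, M] with M(t) = [[−Q(t), 0, 0], [a₀ᵀ, 0, 0], [0, −a₀, Q(t)ᵀ]] and the initial condition L(0) = V. Then L(t) = G₁(t)⁻¹ V G₁(t) for all t, where exp(tV) = G₁(t) G₂(t) is the block Cholesky decomposition with G₁(t) block lower triangular and G₂(t) block upper triangular with identity diagonal blocks. -/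
open Matrix

/-!
Write `L = M + N` with `N = [[0, r, 0], [0, 0, -rᵀ], [0, 0, 0]]`. Integrating `r` gives a block
unipotent upper triangular `W` with `W' = N W`, `W 0 = 1`, and the Lax equation says exactly that
`W⁻¹ L W` is constant, so `L = W V W⁻¹`. Then `D t = exp (t V) W⁻¹` satisfies `D' = D M`; as `M` is
block lower triangular, the part of `D` above the block diagonal solves a linear ODE with zero
initial value, so `D` stays block lower triangular. Hence `exp (t V) = D W` is a second block
decomposition, uniqueness gives `G₁ = D`, and `G₁⁻¹ V G₁ = W exp (-t V) V exp (t V) W⁻¹ = L`.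
-/

open NormedSpace

attribute [local instance] Matrix.linftyOpNormedAddCommGroup Matrix.linftyOpNormedSpace
  Matrix.linftyOpNormedRing Matrix.linftyOpNormedAlgebra

theorem eq_zero_of_hasDerivAt_clm_apply {E : Type*} [NormedAddCommGroup E] [NormedSpace ℝ E]
    {A : ℝ → E →L[ℝ] E} (hA : Continuous A) {f : ℝ → E}
    (hf : ∀ t, HasDerivAt f (A t (f t)) t) {t₀ : ℝ} (hf₀ : f t₀ = 0) (t : ℝ) : f t = 0 := by
  obtain ⟨C, hC⟩ := IsCompact.exists_bound_of_continuousOn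
    (isCompact_Icc (a := min t t₀ - 1) (b := max t t₀ + 1)) hA.continuousOn
  have hlip : ∀ s ∈ Set.Ioo (min t t₀ - 1) (max t t₀ + 1),
      LipschitzOnWith C.toNNReal (A s) Set.univ := fun s hs =>
    ((A s).lipschitz.weaken (by
      rw [← NNReal.coe_le_coe, coe_nnnorm, Real.coe_toNNReal']
      exact (hC s (Set.Ioo_subset_Icc_self hs)).trans (le_max_left _ _))).lipschitzOnWith
  have hzero : ∀ s, HasDerivAt (0 : ℝ → E) (A s ((0 : ℝ → E) s)) s := fun s => by
    simp
  exact ODE_solution_unique_of_mem_Ioo hlip (t₀ := t₀) ⟨by grind, by grind⟩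
    (fun s _ => ⟨hf s, trivial⟩) (fun s _ => ⟨hzero s, trivial⟩) hf₀ ⟨by grind, by grind⟩

section MatrixCalculus

variable {𝕜 : Type*} [NontriviallyNormedField 𝕜] {m l p : Type*} [Fintype l]
  {F : 𝕜 → Matrix m l 𝕜} {F' : Matrix m l 𝕜} {t : 𝕜}

theorem HasDerivAt.matrix_transpose [Fintype m] (hF : HasDerivAt F F' t) :
    HasDerivAt (fun s => (F s)ᵀ) F'ᵀ t :=
  hasDerivAt_pi.2 fun i => hasDerivAt_pi.2 fun j => hasDerivAt_pi.1 (hasDerivAt_pi.1 hF j) i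

theorem HasDerivAt.matrix_mul [Fintype p] {G : 𝕜 → Matrix l p 𝕜} {G' : Matrix l p 𝕜}
    (hF : HasDerivAt F F' t) (hG : HasDerivAt G G' t) :
    HasDerivAt (fun s => F s * G s) (F' * G t + F t * G') t :=
  hasDerivAt_pi.2 fun i => hasDerivAt_pi.2 fun j => by
    simpa [mul_apply, Finset.sum_add_distrib] using HasDerivAt.fun_sum fun k _ =>
      (hasDerivAt_pi.1 (hasDerivAt_pi.1 hF i) k).mul (hasDerivAt_pi.1 (hasDerivAt_pi.1 hG k) j)

end MatrixCalculus

section BlockTriangular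

variable {ι α R : Type*} [LinearOrder α] [CommRing R]

variable (R) (b : ι → α) in
def belowBlockDiag : Matrix ι ι R →ₗ[R] Matrix ι ι R where
  toFun X := Matrix.of fun i j => if b j < b i then X i j else 0
  map_add' X Y := by ext i j; by_cases h : b j < b i <;> simp [h]
  map_smul' c X := by ext i j; by_cases h : b j < b i <;> simp [h]

variable {b : ι → α}

theorem belowBlockDiag_eq_zero_iff {X : Matrix ι ι R} :
    belowBlockDiag R b X = 0 ↔ X.BlockTriangular b := by
  constructor
  · intro h i j hij
    simpa [belowBlockDiag, hij] using congrFun (congrFun h i) j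
  · intro h
    ext i j
    simpa [belowBlockDiag] using fun hij => h hij

theorem blockTriangular_sub_belowBlockDiag (X : Matrix ι ι R) :
    (X - belowBlockDiag R b X).BlockTriangular b := fun i j hij => by
  simp [belowBlockDiag, hij]

theorem belowBlockDiag_mul_of_blockTriangular [Fintype ι] {X M : Matrix ι ι R}
    (hM : M.BlockTriangular b) :
    belowBlockDiag R b (X * M) = belowBlockDiag R b (belowBlockDiag R b X * M) := by
  have hlow := belowBlockDiag_eq_zero_iff.2 ((blockTriangular_sub_belowBlockDiag X).mul hM)
  rw [Matrix.sub_mul, map_sub, sub_eq_zero] at hlow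
  exact hlow

theorem blockTriangular_of_hasDerivAt_mul [Fintype ι] [DecidableEq ι] {D M : ℝ → Matrix ι ι ℝ}
    (hM : Continuous M) (hMb : ∀ t, (M t).BlockTriangular b)
    (hD : ∀ t, HasDerivAt D (D t * M t) t) {t₀ : ℝ}
    (hD₀ : (D t₀).BlockTriangular b) (t : ℝ) : (D t).BlockTriangular b := by
  set P := (belowBlockDiag ℝ b).toContinuousLinearMap
  rw [← belowBlockDiag_eq_zero_iff]
  refine eq_zero_of_hasDerivAt_clm_apply (f := fun s => P (D s))
    (A := fun s => P ∘L (ContinuousLinearMap.mul ℝ _).flip (M s)) (by fun_prop) (fun s => ?_)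
    (belowBlockDiag_eq_zero_iff.2 hD₀) t
  refine (P.hasFDerivAt.comp_hasDerivAt s (hD s)).congr_deriv ?_
  exact belowBlockDiag_mul_of_blockTriangular (hMb s)

theorem blockTriangular_of_mul_left [Fintype ι] [DecidableEq ι] {G X : Matrix ι ι R}
    (hG : G.BlockTriangular b) (hGu : IsUnit G) (hGX : (G * X).BlockTriangular b) :
    X.BlockTriangular b := by
  obtain ⟨_⟩ := hGu.nonempty_invertible
  simpa using (blockTriangular_inv_of_blockTriangular hG).mul hGX

end BlockTriangular

section LaxPair

variable {R : Type*} [NormedRing R] [NormedAlgebra ℝ R] {L M N W Winv : ℝ → R}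

theorem conj_eq_conj_zero_of_lax (hL : ∀ t, HasDerivAt L (L t * M t - M t * L t) t)
    (hLMN : ∀ t, L t = M t + N t) (hW : ∀ t, HasDerivAt W (N t * W t) t)
    (hWinv : ∀ t, HasDerivAt Winv (-(Winv t * N t)) t) (t : ℝ) :
    Winv t * L t * W t = Winv 0 * L 0 * W 0 := by
  have hconst : ∀ s, HasDerivAt (fun s => Winv s * L s * W s) 0 s := fun s => by
    convert ((hWinv s).fun_mul (hL s)).fun_mul (hW s) using 1
    rw [hLMN s]
    noncomm_ring
  exact is_const_of_deriv_eq_zero (fun s => (hconst s).differentiableAt)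
    (fun s => (hconst s).deriv) t 0

theorem hasDerivAt_exp_smul_mul [CompleteSpace R] {V : R} {t : ℝ}
    (hconj : Winv t * L t * W t = V) (hWWinv : W t * Winv t = 1) (hLMN : L t = M t + N t)
    (hWinv : HasDerivAt Winv (-(Winv t * N t)) t) :
    HasDerivAt (fun s => exp (s • V) * Winv s) (exp (t • V) * Winv t * M t) t := by
  have hV : V * Winv t = Winv t * L t := by rw [← hconj, mul_assoc _ (W t), hWWinv, mul_one]
  convert (hasDerivAt_exp_smul_const V t).fun_mul hWinv using 1
  rw [mul_assoc (exp _) V, hV, hLMN]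
  noncomm_ring

end LaxPair

theorem eq_inv_mul_mul_of_conj {ι : Type*} [Fintype ι] [DecidableEq ι]
    {L V W Winv : Matrix ι ι ℝ} (hconj : Winv * L * W = V) (hWWinv : W * Winv = 1) (t : ℝ) :
    L = (exp (t • V) * Winv)⁻¹ * V * (exp (t • V) * Winv) := by
  set E := exp (t • V)
  have hE : IsUnit E.det := (Matrix.isUnit_iff_isUnit_det _).1 (Matrix.isUnit_exp _)
  have hcomm : V * E = E * V := ((Commute.refl V).smul_right t).exp_right.eq
  rw [Matrix.mul_inv_rev, Matrix.inv_eq_left_inv hWWinv]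
  calc L = W * Winv * L * (W * Winv) := by rw [hWWinv, Matrix.one_mul, Matrix.mul_one]
    _ = W * (E⁻¹ * E) * V * Winv := by
      rw [nonsing_inv_mul _ hE, Matrix.mul_one, ← hconj]
      noncomm_ring
    _ = W * E⁻¹ * (E * V) * Winv := by noncomm_ring
    _ = W * E⁻¹ * V * (E * Winv) := by
      rw [← hcomm]
      noncomm_ring

namespace BlockLax

variable {n : ℕ}

section Blk3

variable {A₁₁ B₁₁ : Matrix (Fin n) (Fin n) ℝ} {A₁₂ B₁₂ : Matrix (Fin n) (Fin 1) ℝ}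
  {A₁₃ B₁₃ : Matrix (Fin n) (Fin n) ℝ} {A₂₁ B₂₁ : Matrix (Fin 1) (Fin n) ℝ}
  {A₂₂ B₂₂ : Matrix (Fin 1) (Fin 1) ℝ} {A₂₃ B₂₃ : Matrix (Fin 1) (Fin n) ℝ}
  {A₃₁ B₃₁ : Matrix (Fin n) (Fin n) ℝ} {A₃₂ B₃₂ : Matrix (Fin n) (Fin 1) ℝ}
  {A₃₃ B₃₃ : Matrix (Fin n) (Fin n) ℝ}

theorem blk3_mul :
    blk3 A₁₁ A₁₂ A₁₃ A₂₁ A₂₂ A₂₃ A₃₁ A₃₂ A₃₃ * blk3 B₁₁ B₁₂ B₁₃ B₂₁ B₂₂ B₂₃ B₃₁ B₃₂ B₃₃ =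
      blk3 (A₁₁ * B₁₁ + A₁₂ * B₂₁ + A₁₃ * B₃₁) (A₁₁ * B₁₂ + A₁₂ * B₂₂ + A₁₃ * B₃₂)
        (A₁₁ * B₁₃ + A₁₂ * B₂₃ + A₁₃ * B₃₃) (A₂₁ * B₁₁ + A₂₂ * B₂₁ + A₂₃ * B₃₁)
        (A₂₁ * B₁₂ + A₂₂ * B₂₂ + A₂₃ * B₃₂) (A₂₁ * B₁₃ + A₂₂ * B₂₃ + A₂₃ * B₃₃)
        (A₃₁ * B₁₁ + A₃₂ * B₂₁ + A₃₃ * B₃₁) (A₃₁ * B₁₂ + A₃₂ * B₂₂ + A₃₃ * B₃₂)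
        (A₃₁ * B₁₃ + A₃₂ * B₂₃ + A₃₃ * B₃₃) := by
  ext ((i | i) | i) ((j | j) | j) <;> simp [blk3, mul_apply, Fintype.sum_sum_type]

theorem blk3_add :
    blk3 A₁₁ A₁₂ A₁₃ A₂₁ A₂₂ A₂₃ A₃₁ A₃₂ A₃₃ + blk3 B₁₁ B₁₂ B₁₃ B₂₁ B₂₂ B₂₃ B₃₁ B₃₂ B₃₃ =
      blk3 (A₁₁ + B₁₁) (A₁₂ + B₁₂) (A₁₃ + B₁₃) (A₂₁ + B₂₁) (A₂₂ + B₂₂) (A₂₃ + B₂₃)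
        (A₃₁ + B₃₁) (A₃₂ + B₃₂) (A₃₃ + B₃₃) := by
  ext ((i | i) | i) ((j | j) | j) <;> simp [blk3]

theorem blk3_one : blk3 1 0 0 0 1 0 0 0 1 = (1 : Matrix (Idx n) (Idx n) ℝ) := by
  ext ((i | i) | i) ((j | j) | j) <;> simp [blk3, one_apply]

/-- Numbering the blocks downwards makes `BlockTriangular blockIdx` mean block *lower*
triangular. -/
def blockIdx : Idx n → ℤ :=
  Sum.elim (Sum.elim (fun _ => 0) (fun _ => -1)) (fun _ => -2)

theorem blockTriangular_blk3 :
    (blk3 B₁₁ 0 0 B₂₁ B₂₂ 0 B₃₁ B₃₂ B₃₃).BlockTriangular blockIdx := by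
  rintro ((i | i) | i) ((j | j) | j) h <;> simp [blockIdx] at h <;> simp [blk3]

end Blk3

section UnitUpper

def unitUpper (X : Matrix (Fin n) (Fin 1) ℝ) (Y : Matrix (Fin n) (Fin n) ℝ)
    (Z : Matrix (Fin 1) (Fin n) ℝ) : Matrix (Idx n) (Idx n) ℝ :=
  blk3 1 X Y 0 1 Z 0 0 1

def strictUpper (X : Matrix (Fin n) (Fin 1) ℝ) (Y : Matrix (Fin n) (Fin n) ℝ)
    (Z : Matrix (Fin 1) (Fin n) ℝ) : Matrix (Idx n) (Idx n) ℝ :=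
  blk3 0 X Y 0 0 Z 0 0 0

variable {X X' : Matrix (Fin n) (Fin 1) ℝ} {Y Y' : Matrix (Fin n) (Fin n) ℝ}
  {Z Z' : Matrix (Fin 1) (Fin n) ℝ}

theorem unitUpper_zero : unitUpper (0 : Matrix (Fin n) (Fin 1) ℝ) 0 0 = 1 := blk3_one

theorem unitUpper_mul_unitUpper :
    unitUpper X Y Z * unitUpper X' Y' Z' = unitUpper (X + X') (Y' + X * Z' + Y) (Z + Z') := by
  simp only [unitUpper, blk3_mul]
  congr 1 <;> simp [add_comm]

theorem strictUpper_mul_unitUpper :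
    strictUpper X Y Z * unitUpper X' Y' Z' = strictUpper X (X * Z' + Y) Z := by
  simp only [strictUpper, unitUpper, blk3_mul]
  congr 1 <;> simp

theorem unitUpper_mul_strictUpper :
    unitUpper X Y Z * strictUpper X' Y' Z' = strictUpper X' (Y' + X * Z') Z' := by
  simp only [strictUpper, unitUpper, blk3_mul]
  congr 1 <;> simp

theorem eq_one_of_blockTriangular_unitUpper
    (h : (unitUpper X Y Z).BlockTriangular blockIdx) : unitUpper X Y Z = 1 := by
  have hX : X = 0 := by
    ext i j
    simpa [unitUpper, blk3] using @h (.inl (.inl i)) (.inl (.inr j)) (by simp [blockIdx])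
  have hY : Y = 0 := by
    ext i j
    simpa [unitUpper, blk3] using @h (.inl (.inl i)) (.inr j) (by simp [blockIdx])
  have hZ : Z = 0 := by
    ext i j
    simpa [unitUpper, blk3] using @h (.inl (.inr i)) (.inr j) (by simp [blockIdx])
  rw [hX, hY, hZ, unitUpper_zero]

theorem neg_strictUpper : -strictUpper X Y Z = strictUpper (-X) (-Y) (-Z) := by
  ext ((i | i) | i) ((j | j) | j) <;> simp [strictUpper, blk3]

theorem hasDerivAt_unitUpper {X : ℝ → Matrix (Fin n) (Fin 1) ℝ}
    {Y : ℝ → Matrix (Fin n) (Fin n) ℝ} {Z : ℝ → Matrix (Fin 1) (Fin n) ℝ} {t : ℝ}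
    (hX : HasDerivAt X X' t) (hY : HasDerivAt Y Y' t) (hZ : HasDerivAt Z Z' t) :
    HasDerivAt (fun s => unitUpper (X s) (Y s) (Z s)) (strictUpper X' Y' Z') t := by
  refine hasDerivAt_pi.2 fun i => hasDerivAt_pi.2 fun j => ?_
  rcases i with (i | i) | i <;> rcases j with (j | j) | j <;>
    simp only [unitUpper, strictUpper, blk3, fromBlocks_apply₁₁, fromBlocks_apply₁₂,
      fromBlocks_apply₂₁, fromBlocks_apply₂₂, fromRows_apply_inl, fromRows_apply_inr,
      fromCols_apply_inl, fromCols_apply_inr, Matrix.zero_apply]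
  all_goals first
    | exact hasDerivAt_const _ _
    | exact hasDerivAt_pi.1 (hasDerivAt_pi.1 hX i) j
    | exact hasDerivAt_pi.1 (hasDerivAt_pi.1 hY i) j
    | exact hasDerivAt_pi.1 (hasDerivAt_pi.1 hZ i) j

theorem continuous_strictUpper {X : ℝ → Matrix (Fin n) (Fin 1) ℝ}
    {Y : ℝ → Matrix (Fin n) (Fin n) ℝ} {Z : ℝ → Matrix (Fin 1) (Fin n) ℝ} (hX : Continuous X)
    (hY : Continuous Y) (hZ : Continuous Z) :
    Continuous fun s => strictUpper (X s) (Y s) (Z s) := by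
  refine continuous_pi fun i => continuous_pi fun j => ?_
  rcases i with (i | i) | i <;> rcases j with (j | j) | j <;>
    simp only [strictUpper, blk3, fromBlocks_apply₁₁, fromBlocks_apply₁₂,
      fromBlocks_apply₂₁, fromBlocks_apply₂₂, fromRows_apply_inl, fromRows_apply_inr,
      fromCols_apply_inl, fromCols_apply_inr, Matrix.zero_apply]
  all_goals first
    | exact continuous_const
    | exact continuous_apply_apply i j |>.comp hX
    | exact continuous_apply_apply i j |>.comp hY
    | exact continuous_apply_apply i j |>.comp hZ

theorem eq_mul_unitUpper_of_blockTriangular {E G₁ G₂ : Matrix (Idx n) (Idx n) ℝ}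
    (hE : IsUnit E) (hdec : E = G₁ * G₂) (hG₁ : G₁.BlockTriangular blockIdx)
    (hG₂ : G₂ = unitUpper X' Y' Z')
    (hEU : (E * unitUpper X Y Z).BlockTriangular blockIdx) : G₁ = E * unitUpper X Y Z := by
  subst hdec hG₂
  have hG₁u : IsUnit G₁ := (Matrix.isUnit_iff_isUnit_det _).2 <| isUnit_of_mul_isUnit_left <| by
    simpa [det_mul] using (Matrix.isUnit_iff_isUnit_det _).1 hE
  rw [Matrix.mul_assoc, unitUpper_mul_unitUpper] at hEU ⊢
  rw [eq_one_of_blockTriangular_unitUpper (blockTriangular_of_mul_left hG₁ hG₁u hEU), mul_one]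

end UnitUpper

section IntegratingFactor

variable (r : ℝ → Matrix (Fin n) (Fin 1) ℝ)

noncomputable def w (t : ℝ) : Matrix (Fin n) (Fin 1) ℝ := ∫ s in (0 : ℝ)..t, r s

noncomputable def u (t : ℝ) : Matrix (Fin n) (Fin n) ℝ := ∫ s in (0 : ℝ)..t, -(r s * (w r s)ᵀ)

noncomputable def N (t : ℝ) : Matrix (Idx n) (Idx n) ℝ := strictUpper (r t) 0 (-(r t)ᵀ)

noncomputable def W (t : ℝ) : Matrix (Idx n) (Idx n) ℝ := unitUpper (w r t) (u r t) (-(w r t)ᵀ)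

noncomputable def Winv (t : ℝ) : Matrix (Idx n) (Idx n) ℝ :=
  unitUpper (-w r t) (-(w r t * (w r t)ᵀ) - u r t) (w r t)ᵀ

theorem W_mul_Winv (t : ℝ) : W r t * Winv r t = 1 := by
  rw [W, Winv, unitUpper_mul_unitUpper, ← unitUpper_zero]
  congr 1 <;> abel

theorem W_zero : W r 0 = 1 := by
  simp [W, w, u, unitUpper_zero]

theorem Winv_zero : Winv r 0 = 1 := by
  simp [Winv, w, u, unitUpper_zero]

variable {r} (hr : Continuous r)
include hr

theorem hasDerivAt_w (t : ℝ) : HasDerivAt (w r) (r t) t :=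
  (hr.integral_hasStrictDerivAt 0 t).hasDerivAt

theorem hasDerivAt_u (t : ℝ) : HasDerivAt (u r) (-(r t * (w r t)ᵀ)) t := by
  have hw : Continuous (w r) :=
    continuous_iff_continuousAt.2 fun s => (hasDerivAt_w hr s).continuousAt
  exact ((hr.matrix_mul hw.matrix_transpose).neg.integral_hasStrictDerivAt 0 t).hasDerivAt

theorem hasDerivAt_W (t : ℝ) : HasDerivAt (W r) (N r t * W r t) t := by
  refine (hasDerivAt_unitUpper (hasDerivAt_w hr t) (hasDerivAt_u hr t)
    (hasDerivAt_w hr t).matrix_transpose.neg).congr_deriv ?_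
  rw [N, W, strictUpper_mul_unitUpper]
  simp [Matrix.mul_neg]

theorem hasDerivAt_Winv (t : ℝ) : HasDerivAt (Winv r) (-(Winv r t * N r t)) t := by
  have hw := hasDerivAt_w hr t
  refine (hasDerivAt_unitUpper hw.neg
    ((hw.matrix_mul hw.matrix_transpose).neg.sub (hasDerivAt_u hr t))
    hw.matrix_transpose).congr_deriv ?_
  rw [N, Winv, unitUpper_mul_strictUpper, neg_strictUpper]
  congr 1
  · simp only [Matrix.neg_mul, Matrix.mul_neg, neg_neg]
    abel
  · rw [neg_neg]

theorem continuous_N : Continuous (N r) :=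
  continuous_strictUpper hr continuous_const hr.matrix_transpose.neg

end IntegratingFactor

end BlockLax

open BlockLax in
theorem stmt16_general (n : ℕ) (A₀ : Matrix (Fin n) (Fin n) ℝ)
    (a₀ : Matrix (Fin n) (Fin 1) ℝ) (G₁ G₂ : ℝ → Matrix (Idx n) (Idx n) ℝ)
    (hlow : ∀ t : ℝ, ∃ (B₁₁ : Matrix (Fin n) (Fin n) ℝ) (B₂₁ : Matrix (Fin 1) (Fin n) ℝ)
      (B₂₂ : Matrix (Fin 1) (Fin 1) ℝ) (B₃₁ : Matrix (Fin n) (Fin n) ℝ)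
      (B₃₂ : Matrix (Fin n) (Fin 1) ℝ) (B₃₃ : Matrix (Fin n) (Fin n) ℝ),
      G₁ t = blk3 B₁₁ 0 0 B₂₁ B₂₂ 0 B₃₁ B₃₂ B₃₃)
    (hup : ∀ t : ℝ, ∃ (C₁₂ : Matrix (Fin n) (Fin 1) ℝ) (C₁₃ : Matrix (Fin n) (Fin n) ℝ)
      (C₂₃ : Matrix (Fin 1) (Fin n) ℝ), G₂ t = blk3 1 C₁₂ C₁₃ 0 1 C₂₃ 0 0 1)
    (hdec : ∀ t : ℝ, NormedSpace.exp (t • Vmat A₀ a₀) = G₁ t * G₂ t)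
    (Q : ℝ → Matrix (Fin n) (Fin n) ℝ) (r : ℝ → Matrix (Fin n) (Fin 1) ℝ)
    (hLax : ∀ (t : ℝ) (i j : Idx n),
      HasDerivAt (fun s => blk3 (-(Q s)) (r s) 0 a₀ᵀ 0 (-(r s)ᵀ) 0 (-a₀) (Q s)ᵀ i j)
        ((blk3 (-(Q t)) (r t) 0 a₀ᵀ 0 (-(r t)ᵀ) 0 (-a₀) (Q t)ᵀ *
            blk3 (-(Q t)) 0 0 a₀ᵀ 0 0 0 (-a₀) (Q t)ᵀ -
          blk3 (-(Q t)) 0 0 a₀ᵀ 0 0 0 (-a₀) (Q t)ᵀ *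
            blk3 (-(Q t)) (r t) 0 a₀ᵀ 0 (-(r t)ᵀ) 0 (-a₀) (Q t)ᵀ) i j) t)
    (hinit : blk3 (-(Q 0)) (r 0) 0 a₀ᵀ 0 (-(r 0)ᵀ) 0 (-a₀) (Q 0)ᵀ = Vmat A₀ a₀) :
    ∀ t : ℝ, blk3 (-(Q t)) (r t) 0 a₀ᵀ 0 (-(r t)ᵀ) 0 (-a₀) (Q t)ᵀ
      = (G₁ t)⁻¹ * Vmat A₀ a₀ * G₁ t := by
  set V := Vmat A₀ a₀
  let L : ℝ → Matrix (Idx n) (Idx n) ℝ :=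
    fun s => blk3 (-(Q s)) (r s) 0 a₀ᵀ 0 (-(r s)ᵀ) 0 (-a₀) (Q s)ᵀ
  let M : ℝ → Matrix (Idx n) (Idx n) ℝ := fun s => blk3 (-(Q s)) 0 0 a₀ᵀ 0 0 0 (-a₀) (Q s)ᵀ
  have hL : ∀ t, HasDerivAt L (L t * M t - M t * L t) t := fun t =>
    hasDerivAt_pi.2 fun i => hasDerivAt_pi.2 (hLax t i)
  have hr : Continuous r := continuous_pi fun i => continuous_pi fun j =>
    continuous_iff_continuousAt.2 fun t => (hLax t (.inl (.inl i)) (.inl (.inr j))).continuousAt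
  have hLMN : ∀ t, L t = M t + N r t := fun t => by
    simp only [L, M, N, strictUpper, blk3_add]
    congr 1 <;> simp
  have hM : Continuous M := by
    have hML : M = fun s => L s - N r s := funext fun s => by rw [hLMN s, add_sub_cancel_right]
    rw [hML]
    exact (continuous_iff_continuousAt.2 fun t => (hL t).continuousAt).sub (continuous_N hr)
  have hconj : ∀ t, Winv r t * L t * W r t = V := fun t => by
    rw [conj_eq_conj_zero_of_lax hL hLMN (hasDerivAt_W hr) (hasDerivAt_Winv hr) t, Winv_zero,
      W_zero, one_mul, mul_one]
    exact hinit
  have hlower : ∀ t, (exp (t • V) * Winv r t).BlockTriangular blockIdx :=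
    blockTriangular_of_hasDerivAt_mul hM (fun _ => blockTriangular_blk3)
      (fun t => hasDerivAt_exp_smul_mul (hconj t) (W_mul_Winv r t) (hLMN t)
        (hasDerivAt_Winv hr t)) (t₀ := 0) (by simp [Winv_zero, blockTriangular_one])
  intro t
  obtain ⟨B₁₁, B₂₁, B₂₂, B₃₁, B₃₂, B₃₃, hG₁⟩ := hlow t
  obtain ⟨C₁₂, C₁₃, C₂₃, hG₂⟩ := hup t
  rw [eq_mul_unitUpper_of_blockTriangular (isUnit_exp _) (hdec t)
    (hG₁ ▸ blockTriangular_blk3) hG₂ (hlower t)]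
  exact eq_inv_mul_mul_of_conj (hconj t) (W_mul_Winv r t) t

/-- Any solution `L(t) = [[−Q(t), r(t), 0], [a₀ᵀ, 0, −r(t)ᵀ], [0, −a₀, Q(t)ᵀ]]`
of the Lax equation `L̇ = [L, M]` with initial condition `L(0) = V` is given by
`L(t) = G₁(t)⁻¹ V G₁(t)`, where `exp(tV) = G₁(t) G₂(t)` is the block Cholesky decomposition. -/
theorem stmt16 (n : ℕ) (A₀ : Matrix (Fin n) (Fin n) ℝ) (hA₀ : A₀ᵀ = A₀)
    (a₀ : Matrix (Fin n) (Fin 1) ℝ) (G₁ G₂ : ℝ → Matrix (Idx n) (Idx n) ℝ)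
    (hlow : ∀ t : ℝ, ∃ (B₁₁ : Matrix (Fin n) (Fin n) ℝ) (B₂₁ : Matrix (Fin 1) (Fin n) ℝ)
      (B₂₂ : Matrix (Fin 1) (Fin 1) ℝ) (B₃₁ : Matrix (Fin n) (Fin n) ℝ)
      (B₃₂ : Matrix (Fin n) (Fin 1) ℝ) (B₃₃ : Matrix (Fin n) (Fin n) ℝ),
      G₁ t = blk3 B₁₁ 0 0 B₂₁ B₂₂ 0 B₃₁ B₃₂ B₃₃)
    (hup : ∀ t : ℝ, ∃ (C₁₂ : Matrix (Fin n) (Fin 1) ℝ) (C₁₃ : Matrix (Fin n) (Fin n) ℝ)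
      (C₂₃ : Matrix (Fin 1) (Fin n) ℝ), G₂ t = blk3 1 C₁₂ C₁₃ 0 1 C₂₃ 0 0 1)
    (hdec : ∀ t : ℝ, NormedSpace.exp (t • Vmat A₀ a₀) = G₁ t * G₂ t)
    (Q : ℝ → Matrix (Fin n) (Fin n) ℝ) (r : ℝ → Matrix (Fin n) (Fin 1) ℝ)
    (hLax : ∀ (t : ℝ) (i j : Idx n),
      HasDerivAt (fun s => blk3 (-(Q s)) (r s) 0 a₀ᵀ 0 (-(r s)ᵀ) 0 (-a₀) (Q s)ᵀ i j)
        ((blk3 (-(Q t)) (r t) 0 a₀ᵀ 0 (-(r t)ᵀ) 0 (-a₀) (Q t)ᵀ *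
            blk3 (-(Q t)) 0 0 a₀ᵀ 0 0 0 (-a₀) (Q t)ᵀ -
          blk3 (-(Q t)) 0 0 a₀ᵀ 0 0 0 (-a₀) (Q t)ᵀ *
            blk3 (-(Q t)) (r t) 0 a₀ᵀ 0 (-(r t)ᵀ) 0 (-a₀) (Q t)ᵀ) i j) t)
    (hinit : blk3 (-(Q 0)) (r 0) 0 a₀ᵀ 0 (-(r 0)ᵀ) 0 (-a₀) (Q 0)ᵀ = Vmat A₀ a₀) :
    ∀ t : ℝ, blk3 (-(Q t)) (r t) 0 a₀ᵀ 0 (-(r t)ᵀ) 0 (-a₀) (Q t)ᵀ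
      = (G₁ t)⁻¹ * Vmat A₀ a₀ * G₁ t :=
  stmt16_general n A₀ a₀ G₁ G₂ hlow hup hdec Q r hLax hinit
end
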